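/- arXiv:1105.1894 — 12 statements merged into one kernel-verified Lean document; each statement's English description precedes it below -/
import Mathlib

section
/- Let F be a finite field and E an extension field of F, let n be a positive integer, and let α ∈ E have multiplicative order exactly n. Let h, f ∈ F[X] be coprime with v := deg h < u := deg f and f(0) ≠ 0, and let a_j ∈ F be the j-th coefficient of the formal power series h/f ∈ F[[X]]. Let p be a positive integer with f ∣ X^p − 1 and gcd(p, n) = 1, let b be an integer and μ ≥ 2. If c ∈ F[X] is nonzero with deg c < n and a_j · c(α^{b+j}) = 0 in E for every j = 0, 1, …, μ−2, then the Hamming weight of c satisfies wt(c) ≥ ⌈(μ−1−v)/u⌉ + 1; equivalently, (wt(c) − 1)·u + v ≥ μ − 1. -/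
/-!
Write `S` for the support of `c`. Expanding `c(α^(b+j))` coefficientwise,
`∑ⱼ aⱼ c(α^(b+j)) Xʲ = ∑_{i ∈ S} cᵢ α^(bi) (h/f)(α^i X)`,
a sum of `|S|` rescaled copies of `h/f`.
The denominators `f(α^i X)` divide `α^(ip) X^p - 1`, and the `α^(ip)` are distinct because
`gcd(p, n) = 1`, so the denominators are pairwise coprime. Over the common denominator the numerator
`N` has degree at most `(|S| - 1) u + v`, and it is nonzero because `f(α^i X)` cannot divide
`cᵢ α^(bi) h(α^i X)`, which has smaller degree. The hypothesis says that the series, hence `N`,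
vanishes to order `μ - 1`, so `μ - 1 ≤ deg N`.
-/

open Polynomial

namespace Polynomial

theorem coe_comp_C_mul_X {R : Type*} [CommSemiring R] (p : R[X]) (r : R) :
    ((p.comp (C r * X) : R[X]) : PowerSeries R) = PowerSeries.rescale r p := by
  ext n
  rw [coeff_coe, PowerSeries.coeff_rescale, coeff_coe, comp_C_mul_X_coeff, mul_comm]

theorem natDegree_comp_C_mul_X {R : Type*} [CommRing R] [IsDomain R] (p : R[X]) {r : R}
    (hr : r ≠ 0) : (p.comp (C r * X)).natDegree = p.natDegree := by
  rw [natDegree_comp, natDegree_C_mul_X r hr, mul_one]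

theorem comp_C_mul_X_dvd_C_mul_X_pow_sub_one {R : Type*} [CommRing R] {f : R[X]} {p : ℕ}
    (hf : f ∣ X ^ p - 1) (r : R) : f.comp (C r * X) ∣ C (r ^ p) * X ^ p - 1 := by
  have := _root_.map_dvd (compRingHom (C r * X)) hf
  rwa [coe_compRingHom_apply, coe_compRingHom_apply, sub_comp, pow_comp, X_comp, one_comp,
    mul_pow, ← C_pow] at this

theorem isCoprime_C_mul_X_pow_sub_one {K : Type*} [Field K] {γ δ : K} (h : γ ≠ δ) (p : ℕ) :
    IsCoprime (C γ * X ^ p - 1) (C δ * X ^ p - 1) := by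
  have hunit : C (γ - δ)⁻¹ * (C γ - C δ) = 1 := by
    rw [← C_sub, ← C_mul, inv_mul_cancel₀ (sub_ne_zero.mpr h), C_1]
  exact ⟨C (γ - δ)⁻¹ * C δ, -(C (γ - δ)⁻¹ * C γ), by linear_combination hunit⟩

theorem le_natDegree_of_X_pow_dvd_coe {R : Type*} [CommSemiring R] [Nontrivial R]
    [NoZeroDivisors R] {N : R[X]} (hN : N ≠ 0) {m : ℕ}
    (h : PowerSeries.X ^ m ∣ (N : PowerSeries R)) : m ≤ N.natDegree := by
  have hX : X ^ m ∣ N := X_pow_dvd_iff.mpr fun d hd => by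
    simpa using PowerSeries.X_pow_dvd_iff.mp h d hd
  simpa using natDegree_le_of_dvd hX hN

theorem eval_map_mul_pow {F E : Type*} [CommSemiring F] [CommSemiring E] (φ : F →+* E)
    (c : F[X]) (x y : E) (j : ℕ) :
    (c.map φ).eval (x * y ^ j) = ∑ i ∈ c.support, φ (c.coeff i) * x ^ i * (y ^ i) ^ j := by
  rw [eval_map, eval₂_eq_sum, Polynomial.sum_def]
  refine Finset.sum_congr rfl fun i _ => ?_
  ring

end Polynomial

section CommonDenominator

variable {ι : Type*} [DecidableEq ι]

theorem sum_mul_prod_erase_ne_zero {R : Type*} [CommRing R] {s : Finset ι} {P Q : ι → R}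
    (hQ : (s : Set ι).Pairwise fun i j => IsCoprime (Q i) (Q j)) {i : ι} (hi : i ∈ s)
    (hPQ : ¬ Q i ∣ P i) :
    ∑ j ∈ s, P j * ∏ l ∈ s.erase j, Q l ≠ 0 := by
  intro hzero
  have hrest : Q i ∣ ∑ j ∈ s.erase i, P j * ∏ l ∈ s.erase j, Q l :=
    Finset.dvd_sum fun j hj => dvd_mul_of_dvd_right (Finset.dvd_prod_of_mem Q
      (Finset.mem_erase.mpr ⟨(Finset.ne_of_mem_erase hj).symm, hi⟩)) _
  have hterm : Q i ∣ P i * ∏ l ∈ s.erase i, Q l := by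
    rw [← dvd_add_left hrest,
      Finset.add_sum_erase s (fun j => P j * ∏ l ∈ s.erase j, Q l) hi, hzero]
    exact dvd_zero _
  have hcop : IsCoprime (Q i) (∏ l ∈ s.erase i, Q l) :=
    IsCoprime.prod_right fun l hl =>
      hQ hi (Finset.mem_of_mem_erase hl) (Finset.ne_of_mem_erase hl).symm
  exact hPQ (hcop.dvd_of_dvd_mul_right hterm)

theorem natDegree_sum_mul_prod_erase_le {R : Type*} [CommSemiring R] {s : Finset ι}
    {P Q : ι → R[X]} {u v : ℕ} (hP : ∀ i ∈ s, (P i).natDegree ≤ v)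
    (hQ : ∀ i ∈ s, (Q i).natDegree ≤ u) :
    (∑ j ∈ s, P j * ∏ l ∈ s.erase j, Q l).natDegree ≤ (s.card - 1) * u + v := by
  refine natDegree_sum_le_of_forall_le s _ fun j hj => natDegree_mul_le.trans ?_
  have hprod : (∏ l ∈ s.erase j, Q l).natDegree ≤ (s.card - 1) * u := by
    refine (natDegree_prod_le _ _).trans <|
      (Finset.sum_le_card_nsmul _ _ _ fun l hl => hQ l (Finset.mem_of_mem_erase hl)).trans_eq ?_
    rw [smul_eq_mul, Finset.card_erase_of_mem hj]
  linarith [hP j hj]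

theorem sum_rescale_mul_prod_eq {R : Type*} [CommRing R] (s : Finset ι) (lam β : ι → R)
    {A : PowerSeries R} {f h : R[X]} (hA : A * f = h) :
    (∑ i ∈ s, PowerSeries.C (lam i) * PowerSeries.rescale (β i) A) *
        ((∏ i ∈ s, f.comp (C (β i) * X) : R[X]) : PowerSeries R) =
      ((∑ i ∈ s, C (lam i) * h.comp (C (β i) * X) *
          ∏ l ∈ s.erase i, f.comp (C (β l) * X) : R[X]) : PowerSeries R) := by
  simp only [← coeToPowerSeries.ringHom_apply, map_sum, map_prod, map_mul]
  simp only [coeToPowerSeries.ringHom_apply, coe_C, coe_comp_C_mul_X, Finset.sum_mul]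
  refine Finset.sum_congr rfl fun i hi => ?_
  rw [← Finset.mul_prod_erase s _ hi, ← hA, map_mul]
  ring

theorem le_of_coeff_sum_rescale_eq_zero {K : Type*} [Field K] {s : Finset ι} (hs : s.Nonempty)
    {lam β : ι → K} (hlam : ∀ i ∈ s, lam i ≠ 0) (hβ : ∀ i ∈ s, β i ≠ 0)
    {A : PowerSeries K} {f h : K[X]} (hA : A * f = h) (hh : h ≠ 0)
    (hdeg : h.natDegree < f.natDegree)
    (hcop : (s : Set ι).Pairwise fun i j =>
      IsCoprime (f.comp (C (β i) * X)) (f.comp (C (β j) * X)))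
    {m : ℕ} (hvanish : ∀ j < m,
      PowerSeries.coeff j (∑ i ∈ s, PowerSeries.C (lam i) * PowerSeries.rescale (β i) A) = 0) :
    m ≤ (s.card - 1) * f.natDegree + h.natDegree := by
  set Q := fun i => f.comp (C (β i) * X)
  set P := fun i => C (lam i) * h.comp (C (β i) * X)
  have hQ : ∀ i ∈ s, (Q i).natDegree = f.natDegree := fun i hi =>
    natDegree_comp_C_mul_X f (hβ i hi)
  have hP : ∀ i ∈ s, (P i).natDegree = h.natDegree := fun i hi => by
    rw [natDegree_C_mul (hlam i hi), natDegree_comp_C_mul_X h (hβ i hi)]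
  have hN : ∑ i ∈ s, P i * ∏ l ∈ s.erase i, Q l ≠ 0 := by
    obtain ⟨i, hi⟩ := hs
    refine sum_mul_prod_erase_ne_zero hcop hi fun hdvd => ?_
    have hP0 : P i ≠ 0 := mul_ne_zero (C_ne_zero.mpr (hlam i hi))
      ((comp_C_mul_X_eq_zero_iff (mem_nonZeroDivisors_of_ne_zero (hβ i hi))).not.mpr hh)
    have := natDegree_le_of_dvd hdvd hP0
    rw [hQ i hi, hP i hi] at this
    omega
  calc m ≤ (∑ i ∈ s, P i * ∏ l ∈ s.erase i, Q l).natDegree := by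
        refine le_natDegree_of_X_pow_dvd_coe hN ?_
        rw [← sum_rescale_mul_prod_eq s lam β hA]
        exact dvd_mul_of_dvd_left (PowerSeries.X_pow_dvd_iff.mpr hvanish) _
    _ ≤ (s.card - 1) * f.natDegree + h.natDegree :=
        natDegree_sum_mul_prod_erase_le (fun i hi => (hP i hi).le) (fun i hi => (hQ i hi).le)

end CommonDenominator

theorem pow_pow_injOn_Iio_orderOf {M : Type*} [Monoid M] {x : M} {p : ℕ}
    (hp : (orderOf x).Coprime p) : (Set.Iio (orderOf x)).InjOn fun i => (x ^ i) ^ p := by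
  intro i hi l hl hil
  simp only [pow_right_comm x _ p] at hil
  rw [Set.mem_Iio, ← hp.orderOf_pow] at hi hl
  exact pow_injOn_Iio_orderOf hi hl hil

theorem pairwise_isCoprime_comp_C_mul_X {K ι : Type*} [Field K] {f : K[X]} {p : ℕ}
    (hf : f ∣ X ^ p - 1) {s : Set ι} {β : ι → K} (hβ : s.InjOn fun i => β i ^ p) :
    s.Pairwise fun i j => IsCoprime (f.comp (C (β i) * X)) (f.comp (C (β j) * X)) :=
  fun _ hi _ hj hij => (isCoprime_C_mul_X_pow_sub_one (hβ.ne hi hj hij) p).mono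
    (comp_C_mul_X_dvd_C_mul_X_pow_sub_one hf _) (comp_C_mul_X_dvd_C_mul_X_pow_sub_one hf _)

theorem mk_mul_eval_map_eq_sum_rescale {F E : Type*} [CommSemiring F] [CommSemiring E]
    (φ : F →+* E) (A : PowerSeries F) (c : F[X]) (x y : E) :
    PowerSeries.mk (fun j => φ (PowerSeries.coeff j A) * (c.map φ).eval (x * y ^ j)) =
      ∑ i ∈ c.support, PowerSeries.C (φ (c.coeff i) * x ^ i) *
        PowerSeries.rescale (y ^ i) (PowerSeries.map φ A) := by
  ext j
  simp only [PowerSeries.coeff_mk, eval_map_mul_pow, map_sum, PowerSeries.coeff_C_mul,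
    PowerSeries.coeff_rescale, PowerSeries.coeff_map, Finset.mul_sum]
  refine Finset.sum_congr rfl fun i _ => ?_
  ring

theorem minimum_distance_bound_general
    (F E : Type*) [Field F] [Field E] [Algebra F E]
    (n : ℕ) (α : E) (hα : orderOf α = n)
    (h f : Polynomial F) (hcop : IsCoprime h f)
    (hdeg : h.natDegree < f.natDegree)
    (a : ℕ → F)
    (ha : (PowerSeries.mk a) * (f : PowerSeries F) = (h : PowerSeries F))
    (p : ℕ) (hfp : f ∣ Polynomial.X ^ p - 1)
    (hpn : Nat.gcd p n = 1)
    (b : ℤ) (μ : ℕ)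
    (c : Polynomial F) (hc : c ≠ 0) (hcdeg : c.natDegree < n)
    (hzero : ∀ j : ℕ, j ≤ μ - 2 →
      algebraMap F E (a j) * (c.map (algebraMap F E)).eval (α ^ (b + (j : ℤ))) = 0) :
    μ - 1 ≤ (c.support.card - 1) * f.natDegree + h.natDegree := by
  classical
  set φ := algebraMap F E
  have hα0 : α ≠ 0 := by
    rintro rfl
    rw [orderOf_zero] at hα
    omega
  have hh0 : h ≠ 0 := by
    rintro rfl
    have := natDegree_eq_zero_of_isUnit (isCoprime_zero_left.mp hcop)
    omega
  have hsupp : (c.support : Set ℕ) ⊆ Set.Iio (orderOf α) := fun i hi =>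
    hα ▸ (le_natDegree_of_mem_supp i hi).trans_lt hcdeg
  rw [← natDegree_map (p := f) φ, ← natDegree_map (p := h) φ]
  refine le_of_coeff_sum_rescale_eq_zero (nonempty_support_iff.mpr hc)
    (fun i hi => mul_ne_zero ((map_ne_zero φ).mpr (mem_support_iff.mp hi))
      (pow_ne_zero i (zpow_ne_zero b hα0)))
    (fun i _ => pow_ne_zero i hα0) (by simpa using congrArg (PowerSeries.map φ) ha)
    (map_ne_zero hh0) (by simpa using hdeg)
    (pairwise_isCoprime_comp_C_mul_X (by simpa using Polynomial.map_dvd φ hfp)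
      ((pow_pow_injOn_Iio_orderOf (hα ▸ Nat.coprime_comm.mp hpn)).mono hsupp)) fun j hj => ?_
  rw [← mk_mul_eval_map_eq_sum_rescale, PowerSeries.coeff_mk, PowerSeries.coeff_mk,
    ← zpow_natCast, ← zpow_add₀ hα0]
  exact hzero j (by omega)

/-- The main theorem (Theorem 2, Minimum Distance): a new lower bound on the
weight of codewords of a cyclic code via rational functions. -/
theorem minimum_distance_bound
    (F E : Type*) [Field F] [Fintype F] [Field E] [Algebra F E]
    (n : ℕ) (hn : 0 < n) (α : E) (hα : orderOf α = n)
    (h f : Polynomial F) (hcop : IsCoprime h f)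
    (hdeg : h.natDegree < f.natDegree) (hf0 : f.coeff 0 ≠ 0)
    (a : ℕ → F)
    (ha : (PowerSeries.mk a) * (f : PowerSeries F) = (h : PowerSeries F))
    (p : ℕ) (hp : 0 < p) (hfp : f ∣ Polynomial.X ^ p - 1)
    (hpn : Nat.gcd p n = 1)
    (b : ℤ) (μ : ℕ) (hμ : 2 ≤ μ)
    (c : Polynomial F) (hc : c ≠ 0) (hcdeg : c.natDegree < n)
    (hzero : ∀ j : ℕ, j ≤ μ - 2 →
      algebraMap F E (a j) * (c.map (algebraMap F E)).eval (α ^ (b + (j : ℤ))) = 0) :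
    μ - 1 ≤ (c.support.card - 1) * f.natDegree + h.natDegree :=
  minimum_distance_bound_general F E n α hα h f hcop hdeg a ha p hfp hpn b μ c hc hcdeg hzero
end

section
/- Let F be a finite field and E an extension field of F, let n be a positive integer, α ∈ E of multiplicative order exactly n, and b an integer. Let h, f ∈ F[X] with f(0) ≠ 0, and let a_j ∈ F be the j-th coefficient of the formal power series h/f ∈ F[[X]]. Then for every c ∈ F[X] with deg c < n and support W, the following identity holds in the power series ring E[[X]]: (∏_{i∈W} f(α^i X)) · (Σ_{j=0}^{∞} a_j c(α^{b+j}) X^j) = Σ_{i∈W} c_i · α^{i b} · h(α^i X) · ∏_{j∈W, j≠i} f(α^j X), where c_i denotes the i-th coefficient of c and f(α^i X), h(α^i X) denote the polynomials f and h (with coefficients mapped into E) with X replaced by α^i·X. -/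
open Polynomial

/-- The polynomial `f(γ·X)`: map the coefficients along `φ` and substitute `γ·X` for `X`. -/
noncomputable def polySubst {F E : Type*} [CommRing F] [CommRing E]
    (φ : F →+* E) (f : Polynomial F) (γ : E) : Polynomial E :=
  (f.map φ).comp (Polynomial.C γ * Polynomial.X)

/-!
As power series, `f(γX)` is the rescaling of `f` by `γ`, and rescaling is a ring homomorphism,
so `A · f = h` with `A = Σ a_j X^j` gives `A(γX) · f(γX) = h(γX)` for every `γ`. Expanding
`c(α^{b+j}) = Σ_i c_i α^{ib} (α^i)^j` writes the syndrome series as `Σ_i c_i α^{ib} A(α^i X)`;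
multiplying by `∏_i f(α^i X)` clears each `A(α^i X)` against its own factor `f(α^i X)`.
-/

theorem Polynomial.coe_comp_C_mul_X_s1 {R : Type*} [CommSemiring R] (p : R[X]) (γ : R) :
    ((p.comp (C γ * X) : R[X]) : PowerSeries R) = PowerSeries.rescale γ p := by
  ext n
  rw [PowerSeries.coeff_rescale, coeff_coe, coeff_coe, comp_C_mul_X_coeff, mul_comm]

theorem Polynomial.coe_map {R S : Type*} [Semiring R] [Semiring S] (φ : R →+* S) (p : R[X]) :
    ((p.map φ : S[X]) : PowerSeries S) = PowerSeries.map φ p := by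
  ext n
  simp

theorem Polynomial.coe_prod {R ι : Type*} [CommSemiring R] (s : Finset ι) (p : ι → R[X]) :
    ((∏ i ∈ s, p i : R[X]) : PowerSeries R) = ∏ i ∈ s, (p i : PowerSeries R) :=
  map_prod coeToPowerSeries.ringHom p s

theorem Polynomial.coe_sum {R ι : Type*} [Semiring R] (s : Finset ι) (p : ι → R[X]) :
    ((∑ i ∈ s, p i : R[X]) : PowerSeries R) = ∑ i ∈ s, (p i : PowerSeries R) :=
  map_sum coeToPowerSeries.ringHom p s

theorem coe_polySubst {F E : Type*} [CommRing F] [CommRing E] (φ : F →+* E) (f : F[X]) (γ : E) :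
    (polySubst φ f γ : PowerSeries E) = PowerSeries.rescale γ (PowerSeries.map φ f) := by
  rw [polySubst, coe_comp_C_mul_X_s1, coe_map]

theorem rescale_map_mul_polySubst {F E : Type*} [CommRing F] [CommRing E] (φ : F →+* E)
    {A : PowerSeries F} {f h : F[X]} (hA : A * f = h) (γ : E) :
    PowerSeries.rescale γ (PowerSeries.map φ A) * polySubst φ f γ = polySubst φ h γ := by
  rw [coe_polySubst, coe_polySubst, ← map_mul, ← map_mul, hA]

theorem zpow_add_natCast_pow {G : Type*} [CommGroupWithZero G] {α : G} (hα : α ≠ 0) (b : ℤ)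
    (i j : ℕ) : (α ^ (b + j)) ^ i = α ^ (i * b) * (α ^ (i : ℤ)) ^ j := by
  rw [← zpow_natCast _ i, ← zpow_natCast _ j, ← zpow_mul, ← zpow_mul, ← zpow_add₀ hα]
  ring_nf

theorem PowerSeries.mk_coeff_mul_eval_zpow_eq_sum_rescale {F E : Type*} [CommRing F] [Field E]
    (φ : F →+* E) (A : PowerSeries E) (c : F[X]) {α : E} (hα : α ≠ 0) (b : ℤ) :
    PowerSeries.mk (fun j => coeff j A * (c.map φ).eval (α ^ (b + j))) =
      ∑ i ∈ c.support, C (φ (c.coeff i) * α ^ (i * b)) * rescale (α ^ (i : ℤ)) A := by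
  ext j
  simp only [coeff_mk, map_sum, coeff_C_mul, coeff_rescale, eval_map, eval₂_eq_sum, sum_def,
    Finset.mul_sum, zpow_add_natCast_pow hα]
  exact Finset.sum_congr rfl fun i _ => by ring

theorem Finset.prod_mul_sum_eq_sum_mul_prod_erase {R ι : Type*} [CommSemiring R] [DecidableEq ι]
    (s : Finset ι) (c g H P : ι → R) (hg : ∀ i ∈ s, g i * P i = H i) :
    (∏ i ∈ s, P i) * ∑ i ∈ s, c i * g i = ∑ i ∈ s, c i * H i * ∏ j ∈ s.erase i, P j := by
  rw [Finset.mul_sum]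
  refine Finset.sum_congr rfl fun i hi => ?_
  rw [← Finset.mul_prod_erase s P hi, ← hg i hi]
  ring

theorem rational_function_identity_general
    (F E : Type*) [Field F] [Field E] [Algebra F E]
    (n : ℕ) (hn : 0 < n) (α : E) (hα : orderOf α = n) (b : ℤ)
    (h f : Polynomial F)
    (a : ℕ → F)
    (ha : (PowerSeries.mk a) * (f : PowerSeries F) = (h : PowerSeries F))
    (c : Polynomial F) :
    ((∏ i ∈ c.support, polySubst (algebraMap F E) f (α ^ (i : ℤ)) : Polynomial E) :
        PowerSeries E) *
      PowerSeries.mk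
        (fun j => algebraMap F E (a j) *
          (c.map (algebraMap F E)).eval (α ^ (b + (j : ℤ)))) =
    ((∑ i ∈ c.support,
        Polynomial.C (algebraMap F E (c.coeff i) * α ^ ((i : ℤ) * b)) *
          polySubst (algebraMap F E) h (α ^ (i : ℤ)) *
          ∏ j ∈ c.support.erase i, polySubst (algebraMap F E) f (α ^ (j : ℤ)) :
        Polynomial E) : PowerSeries E) := by
  have hα0 : α ≠ 0 := by
    rintro rfl
    rw [orderOf_zero] at hα
    omega
  have hmk := PowerSeries.mk_coeff_mul_eval_zpow_eq_sum_rescale (algebraMap F E)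
    (PowerSeries.map (algebraMap F E) (PowerSeries.mk a)) c hα0 b
  simp only [PowerSeries.coeff_map, PowerSeries.coeff_mk] at hmk
  rw [hmk, coe_prod, coe_sum]
  simp only [coe_mul, coe_prod, coe_C]
  exact Finset.prod_mul_sum_eq_sum_mul_prod_erase _ _ _ _ _
    fun i _ => rescale_map_mul_polySubst _ ha _

/-- Equations (13)–(15): the syndrome-type power series
`Σ_j a_j c(α^{b+j}) X^j` equals a rational function with denominator
`∏_{i ∈ W} f(α^i X)`, written as an identity in `E⟦X⟧`. -/
theorem rational_function_identity
    (F E : Type*) [Field F] [Fintype F] [Field E] [Algebra F E]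
    (n : ℕ) (hn : 0 < n) (α : E) (hα : orderOf α = n) (b : ℤ)
    (h f : Polynomial F) (hf0 : f.coeff 0 ≠ 0)
    (a : ℕ → F)
    (ha : (PowerSeries.mk a) * (f : PowerSeries F) = (h : PowerSeries F))
    (c : Polynomial F) (hcdeg : c.natDegree < n) :
    ((∏ i ∈ c.support, polySubst (algebraMap F E) f (α ^ (i : ℤ)) : Polynomial E) :
        PowerSeries E) *
      PowerSeries.mk
        (fun j => algebraMap F E (a j) *
          (c.map (algebraMap F E)).eval (α ^ (b + (j : ℤ)))) =
    ((∑ i ∈ c.support,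
        Polynomial.C (algebraMap F E (c.coeff i) * α ^ ((i : ℤ) * b)) *
          polySubst (algebraMap F E) h (α ^ (i : ℤ)) *
          ∏ j ∈ c.support.erase i, polySubst (algebraMap F E) f (α ^ (j : ℤ)) :
        Polynomial E) : PowerSeries E) :=
  rational_function_identity_general F E n hn α hα b h f a ha c
end

section
/- Let n and q be positive integers with gcd(q, n) = 1. Then the following are equivalent: (i) every cyclotomic coset modulo n with respect to q is closed under negation, i.e., for every residue r modulo n there exists j ∈ ℕ with r·q^j ≡ −r (mod n); (ii) there exists a positive integer m such that n divides q^m + 1. -/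
/-!
Taking `r = 1` in (i) gives `n ∣ q ^ j + 1` for some `j`, possibly `j = 0`; by Euler's theorem
`q ^ (j + φ n) ≡ q ^ j [MOD n]`, so `m = j + φ n` is a positive exponent that works.
Conversely `r * q ^ m + r = r * (q ^ m + 1)`.
-/

open Nat

theorem Nat.pow_add_totient_modEq {q n : ℕ} (hqn : q.Coprime n) (j : ℕ) :
    q ^ (j + φ n) ≡ q ^ j [MOD n] := by
  simpa [pow_add] using (Nat.ModEq.pow_totient hqn).mul_left (q ^ j)

theorem Nat.dvd_pow_add_totient_add_one {q n j : ℕ} (hqn : q.Coprime n) (h : n ∣ q ^ j + 1) :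
    n ∣ q ^ (j + φ n) + 1 :=
  (((pow_add_totient_modEq hqn j).add_right 1).dvd_iff dvd_rfl).mpr h

theorem symmetric_reversible_iff_general
    (n q : ℕ) (hn : 0 < n) (hqn : Nat.gcd q n = 1) :
    (∀ r : ℕ, ∃ j : ℕ, n ∣ r * q ^ j + r) ↔
      (∃ m : ℕ, 0 < m ∧ n ∣ q ^ m + 1) := by
  constructor
  · intro h
    obtain ⟨j, hj⟩ := h 1
    rw [one_mul] at hj
    exact ⟨j + φ n, by simp [hn], dvd_pow_add_totient_add_one hqn hj⟩
  · rintro ⟨m, -, hm⟩ r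
    exact ⟨m, by simpa [mul_add] using hm.mul_left r⟩

/-- Lemma 3 (Symmetric Reversible Codes): every cyclotomic coset modulo `n`
with respect to `q` is closed under negation if and only if `n ∣ q^m + 1` for
some positive integer `m`. -/
theorem symmetric_reversible_iff
    (n q : ℕ) (hn : 0 < n) (hq : 0 < q) (hqn : Nat.gcd q n = 1) :
    (∀ r : ℕ, ∃ j : ℕ, n ∣ r * q ^ j + r) ↔
      (∃ m : ℕ, 0 < m ∧ n ∣ q ^ m + 1) :=
  symmetric_reversible_iff_general n q hn hqn
end

section
/- Let n > 2 and q be positive integers with gcd(q, n) = 1, let m be the smallest positive integer such that n divides q^m + 1, and let r be a positive integer with gcd(r, n) = 1. Then the cyclotomic coset M_r = { r·q^j mod n : j ∈ ℕ } has exactly 2m elements. -/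
/-!
Reduce modulo `n`: with `x = q` in `ZMod n`, the coset is the image under the injective map
`ZMod.val` of `{r * x ^ j}`, and multiplication by the unit `r` is injective, so `M_r` has
`orderOf x` elements. Since `x ^ m = -1 ≠ 1` (as `n > 2`), `x ^ (2m) = 1`; and `x ^ k = 1` for
some `0 < k < 2m` would give `x ^ |m - k| = -1` with `0 < |m - k| < m`, against minimality of
`m`. Hence `orderOf x = 2m`.
-/

lemma IsOfFinOrder.ncard_range_pow {M : Type*} [Monoid M] {x : M} (hx : IsOfFinOrder x) :
    (Set.range (x ^ · : ℕ → M)).ncard = orderOf x := by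
  classical
  rw [← Submonoid.coe_powers, hx.powers_eq_image_range_orderOf, Set.ncard_coe_finset,
    Finset.card_image_of_injOn, Finset.card_range]
  simpa [Nat.Iio_eq_range] using pow_injOn_Iio_orderOf (x := x)

lemma IsLeftRegular.ncard_range_mul_pow {M : Type*} [Monoid M] {a x : M} (ha : IsLeftRegular a)
    (hx : IsOfFinOrder x) : (Set.range fun j : ℕ => a * x ^ j).ncard = orderOf x := by
  rw [show (fun j : ℕ => a * x ^ j) = (a * ·) ∘ (x ^ ·) from rfl, Set.range_comp,
    Set.ncard_image_of_injective _ ha, hx.ncard_range_pow]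

lemma ZMod.ncard_range_natCast_mul_pow_mod (n a q : ℕ) [NeZero n] :
    (Set.range fun j : ℕ => a * q ^ j % n).ncard =
      (Set.range fun j : ℕ => (a : ZMod n) * (q : ZMod n) ^ j).ncard := by
  have hval : (fun j : ℕ => a * q ^ j % n) =
      ZMod.val ∘ fun j : ℕ => (a : ZMod n) * (q : ZMod n) ^ j := by
    funext j
    simp [← ZMod.val_natCast]
  rw [hval, Set.range_comp, Set.ncard_image_of_injective _ (ZMod.val_injective n)]

lemma ZMod.natCast_pow_eq_neg_one_iff {n q t : ℕ} :
    (q : ZMod n) ^ t = -1 ↔ n ∣ q ^ t + 1 := by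
  rw [← ZMod.natCast_eq_zero_iff, Nat.cast_add, Nat.cast_pow, Nat.cast_one,
    add_eq_zero_iff_eq_neg]

lemma orderOf_eq_two_mul_of_pow_eq_neg_one {M : Type*} [Monoid M] [HasDistribNeg M]
    (hM : (-1 : M) ≠ 1) {x : M} {m : ℕ} (hm : 0 < m) (hxm : x ^ m = -1)
    (hmin : ∀ t, 0 < t → x ^ t = -1 → m ≤ t) : orderOf x = 2 * m := by
  rw [orderOf_eq_iff (by omega)]
  refine ⟨by rw [two_mul, pow_add, hxm, neg_one_mul, neg_neg], fun k hk hk0 hxk => ?_⟩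
  rcases lt_trichotomy k m with hkm | rfl | hmk
  · have : x ^ (m - k) = -1 := by
      rw [← hxm, ← Nat.sub_add_cancel hkm.le, pow_add, hxk, mul_one, Nat.sub_add_cancel hkm.le]
    exact absurd (hmin _ (by omega) this) (by omega)
  · exact hM (hxm ▸ hxk)
  · have : x ^ (k - m) = -1 := by
      rwa [← Nat.sub_add_cancel hmk.le, pow_add, hxm, mul_neg_one, neg_eq_iff_eq_neg] at hxk
    exact absurd (hmin _ (by omega) this) (by omega)

theorem cyclotomic_coset_card_symmetric_reversible_general
    (n q r : ℕ) (hn : 2 < n)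
    (hrn : Nat.gcd r n = 1)
    (m : ℕ) (hm : 0 < m) (hdvd : n ∣ q ^ m + 1)
    (hmin : ∀ t : ℕ, 0 < t → n ∣ q ^ t + 1 → m ≤ t) :
    (Set.range fun j : ℕ => r * q ^ j % n).ncard = 2 * m := by
  have : Fact (2 < n) := ⟨hn⟩
  have : NeZero n := ⟨by omega⟩
  have hord : orderOf (q : ZMod n) = 2 * m :=
    orderOf_eq_two_mul_of_pow_eq_neg_one ZMod.neg_one_ne_one hm
      (ZMod.natCast_pow_eq_neg_one_iff.mpr hdvd)
      fun t ht hqt => hmin t ht (ZMod.natCast_pow_eq_neg_one_iff.mp hqt)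
  have hr : IsLeftRegular (r : ZMod n) :=
    ((ZMod.isUnit_iff_coprime r n).mpr hrn).isRegular.left
  rw [ZMod.ncard_range_natCast_mul_pow_mod, hr.ncard_range_mul_pow
    (orderOf_pos_iff.mp (hord ▸ by omega)), hord]

/-- Lemma 4 (Cardinality of Symmetric Reversible Codes): if `n > 2`,
`gcd(r, n) = 1` and `m` is the smallest positive integer with `n ∣ q^m + 1`,
then the cyclotomic coset `M_r = { r·q^j mod n : j ∈ ℕ }` has exactly `2m`
elements. -/
theorem cyclotomic_coset_card_symmetric_reversible
    (n q r : ℕ) (hn : 2 < n) (hq : 0 < q) (hr : 0 < r)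
    (hqn : Nat.gcd q n = 1) (hrn : Nat.gcd r n = 1)
    (m : ℕ) (hm : 0 < m) (hdvd : n ∣ q ^ m + 1)
    (hmin : ∀ t : ℕ, 0 < t → n ∣ q ^ t + 1 → m ≤ t) :
    (Set.range fun j : ℕ => r * q ^ j % n).ncard = 2 * m :=
  cyclotomic_coset_card_symmetric_reversible_general n q r hn hrn m hm hdvd hmin
end

section
/- (Hartmann–Tzeng bound.) Let F be a finite field and E an extension field of F, let n be a positive integer and α ∈ E an element of multiplicative order exactly n. Let b, m₁, m₂ be integers with gcd(n, m₁) = 1 and gcd(n, m₂) = 1, and let d₀ ≥ 2 and ν ≥ 0 be integers. If c ∈ F[X] is nonzero with deg c < n and c(α^{b + i₁·m₁ + i₂·m₂}) = 0 for all i₁ = 0, …, d₀ − 2 and all i₂ = 0, …, ν, then the Hamming weight of c is at least d₀ + ν. -/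
/-!
With `a_s = c_s α^{bs}`, `x_s = α^{m₁s}` and `y_s = α^{m₂s}` for `s` in the support `S` of `c`,
the hypothesis reads `∑_s a_s x_s^i y_s^j = 0` for `i < d₀ - 1`, `j ≤ ν`, and the nodes `x_s`,
`y_s` are pairwise distinct because `m₁`, `m₂` are units modulo `n`.
If `|S| ≤ d₀ - 1 + ν`, pick `T ⊆ S` with `|T| = |S| - (d₀ - 1) ≤ ν` and let
`P = ∏_{t ∈ T} (X - y_t)`. Combining the equations with the coefficients of `P` gives
`∑_{s ∈ S \ T} a_s P(y_s) x_s^i = 0` for all `i < d₀ - 1`, and `|S \ T| ≤ d₀ - 1`, so by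
Vandermonde `a_s P(y_s) = 0` on the nonempty set `S \ T`, although neither factor vanishes there.
-/

open Polynomial Finset

theorem zpow_mul_injOn_Iio_orderOf {G : Type*} [Group G] (x : G) {m : ℤ}
    (hm : Int.gcd (orderOf x) m = 1) :
    (Set.Iio (orderOf x)).InjOn fun s : ℕ => x ^ (m * s) := by
  intro s hs t ht hst
  have hdvd : (orderOf x : ℤ) ∣ m * (s - t) := by
    rw [mul_sub]
    exact orderOf_dvd_sub_iff_zpow_eq_zpow.mpr hst
  have hst' : (s : ℤ) - t = 0 :=
    Int.eq_zero_of_abs_lt_dvd (Int.dvd_of_dvd_mul_right_of_gcd_one hdvd hm)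
      (by rw [abs_sub_lt_iff]; simp only [Set.mem_Iio] at hs ht; omega)
  omega

theorem Finset.eq_zero_of_forall_sum_mul_pow_eq_zero {R ι : Type*} [CommRing R] [IsDomain R]
    (A : Finset ι) {x u : ι → R} (hx : Set.InjOn x A)
    (h : ∀ i < #A, ∑ s ∈ A, u s * x s ^ i = 0) : ∀ s ∈ A, u s = 0 := by
  let e := A.equivFin
  have hzero := Matrix.eq_zero_of_forall_pow_sum_mul_pow_eq_zero
    (f := fun k => x (e.symm k)) (v := fun k => u (e.symm k))
    (hx.injective.comp e.symm.injective) fun i => by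
      rw [← h i i.2, ← Finset.sum_coe_sort A]
      exact e.symm.sum_comp fun s : A => u s * x s ^ (i : ℕ)
  intro s hs
  simpa using congr_fun hzero (e ⟨s, hs⟩)

theorem Polynomial.sum_mul_eval_eq_zero {R ι : Type*} [CommSemiring R] (S : Finset ι)
    (w y : ι → R) (P : R[X]) (h : ∀ j ≤ P.natDegree, ∑ s ∈ S, w s * y s ^ j = 0) :
    ∑ s ∈ S, w s * P.eval (y s) = 0 := by
  simp_rw [eval_eq_sum_range, Finset.mul_sum]
  rw [Finset.sum_comm]
  refine Finset.sum_eq_zero fun j hj => ?_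
  calc ∑ s ∈ S, w s * (P.coeff j * y s ^ j) = P.coeff j * ∑ s ∈ S, w s * y s ^ j := by
        rw [Finset.mul_sum]
        exact Finset.sum_congr rfl fun s _ => by ring
    _ = 0 := by rw [h j (Nat.lt_succ_iff.mp (Finset.mem_range.mp hj)), mul_zero]

theorem Finset.card_gt_of_sum_mul_pow_mul_pow_eq_zero {R ι : Type*} [CommRing R] [IsDomain R]
    (S : Finset ι) (hS : S.Nonempty) {δ ν : ℕ} (hδ : 0 < δ) {a x y : ι → R}
    (ha : ∀ s ∈ S, a s ≠ 0) (hx : Set.InjOn x S) (hy : Set.InjOn y S)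
    (h : ∀ i < δ, ∀ j ≤ ν, ∑ s ∈ S, a s * x s ^ i * y s ^ j = 0) : δ + ν < #S := by
  classical
  by_contra! hle
  obtain ⟨T, hTS, hT⟩ := Finset.exists_subset_card_eq (Nat.sub_le #S δ)
  set P := Lagrange.nodal T y
  have hP : P.natDegree ≤ ν := by rw [Lagrange.natDegree_nodal]; omega
  have hPS : ∀ i < δ, ∑ s ∈ S, a s * P.eval (y s) * x s ^ i = 0 := fun i hi => by
    rw [← sum_mul_eval_eq_zero S (fun s => a s * x s ^ i) y P fun j hj => h i hi j (hj.trans hP)]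
    exact Finset.sum_congr rfl fun s _ => by ring
  have hPST : ∀ i < δ, ∑ s ∈ S \ T, a s * P.eval (y s) * x s ^ i = 0 := fun i hi => by
    rw [← hPS i hi]
    refine Finset.sum_subset Finset.sdiff_subset fun s hsS hs => ?_
    have hsT : s ∈ T := by_contra fun hsT => hs (mem_sdiff.mpr ⟨hsS, hsT⟩)
    rw [Lagrange.eval_nodal_at_node hsT, mul_zero, zero_mul]
  have hcard : #(S \ T) = min #S δ := by rw [card_sdiff_of_subset hTS, hT]; omega
  have hvanish := (S \ T).eq_zero_of_forall_sum_mul_pow_eq_zero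
    (hx.mono (coe_subset.mpr sdiff_subset)) fun i hi => hPST i (by omega)
  obtain ⟨s, hs⟩ : (S \ T).Nonempty := by
    rw [← card_pos, hcard]
    exact lt_min hS.card_pos hδ
  obtain ⟨hsS, hsT⟩ := mem_sdiff.mp hs
  refine mul_ne_zero (ha s hsS) (Lagrange.eval_nodal_not_at_node fun t ht hst => ?_) (hvanish s hs)
  exact hsT (hy hsS (hTS ht) hst ▸ ht)

theorem hartmann_tzeng_bound_general
    (F E : Type*) [Field F] [Field E] [Algebra F E]
    (n : ℕ) (α : E) (hα : orderOf α = n)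
    (b m₁ m₂ : ℤ) (hm₁ : Int.gcd (n : ℤ) m₁ = 1) (hm₂ : Int.gcd (n : ℤ) m₂ = 1)
    (d₀ ν : ℕ) (hd₀ : 2 ≤ d₀)
    (c : Polynomial F) (hc : c ≠ 0) (hcdeg : c.natDegree < n)
    (hzero : ∀ i₁ i₂ : ℕ, i₁ ≤ d₀ - 2 → i₂ ≤ ν →
      (c.map (algebraMap F E)).eval (α ^ (b + (i₁ : ℤ) * m₁ + (i₂ : ℤ) * m₂)) = 0) :
    d₀ + ν ≤ c.support.card := by
  have hα0 : α ≠ 0 := by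
    rintro rfl
    rw [orderOf_zero] at hα
    omega
  set u := Units.mk0 α hα0
  have hu : orderOf u = n := orderOf_units.symm.trans hα
  have hnodes : ∀ m : ℤ, Int.gcd n m = 1 →
      Set.InjOn (fun s : ℕ => ((u ^ (m * s) : Eˣ) : E)) c.support := fun m hm =>
    (Units.val_injective.comp_injOn (zpow_mul_injOn_Iio_orderOf u (hu ▸ hm))).mono
      fun s hs => hu ▸ (le_natDegree_of_mem_supp s hs).trans_lt hcdeg
  have hsyndrome : ∀ i < d₀ - 1, ∀ j ≤ ν, ∑ s ∈ c.support,
      algebraMap F E (c.coeff s) * ↑(u ^ (b * s)) * ↑(u ^ (m₁ * s)) ^ i * ↑(u ^ (m₂ * s)) ^ j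
        = 0 := fun i hi j hj => by
    rw [← hzero i j (by omega) hj, eval_map, eval₂_eq_sum, sum_def]
    refine sum_congr rfl fun s _ => ?_
    have hpow : (u ^ (b + (i : ℤ) * m₁ + (j : ℤ) * m₂)) ^ s
        = u ^ (b * s) * (u ^ (m₁ * s)) ^ i * (u ^ (m₂ * s)) ^ j := by
      group
    rw [show α = u from rfl, ← Units.val_zpow_eq_zpow_val, ← Units.val_pow_eq_pow_val _ s, hpow]
    simp only [Units.val_mul, Units.val_pow_eq_pow_val, mul_assoc]
  have := c.support.card_gt_of_sum_mul_pow_mul_pow_eq_zero (support_nonempty.mpr hc)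
    (by omega : 0 < d₀ - 1)
    (fun s hs =>
      mul_ne_zero ((_root_.map_ne_zero _).mpr (mem_support_iff.mp hs)) (Units.ne_zero _))
    (hnodes m₁ hm₁) (hnodes m₂ hm₂) hsyndrome
  omega

/-- Theorem 1 (Hartmann–Tzeng bound): if the codeword `c` vanishes at
`α^{b + i₁·m₁ + i₂·m₂}` for all `0 ≤ i₁ ≤ d₀−2` and `0 ≤ i₂ ≤ ν`, with
`gcd(n, m₁) = gcd(n, m₂) = 1`, then its Hamming weight is at least `d₀ + ν`. -/
theorem hartmann_tzeng_bound
    (F E : Type*) [Field F] [Fintype F] [Field E] [Algebra F E]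
    (n : ℕ) (hn : 0 < n) (α : E) (hα : orderOf α = n)
    (b m₁ m₂ : ℤ) (hm₁ : Int.gcd (n : ℤ) m₁ = 1) (hm₂ : Int.gcd (n : ℤ) m₂ = 1)
    (d₀ ν : ℕ) (hd₀ : 2 ≤ d₀)
    (c : Polynomial F) (hc : c ≠ 0) (hcdeg : c.natDegree < n)
    (hzero : ∀ i₁ i₂ : ℕ, i₁ ≤ d₀ - 2 → i₂ ≤ ν →
      (c.map (algebraMap F E)).eval (α ^ (b + (i₁ : ℤ) * m₁ + (i₂ : ℤ) * m₂)) = 0) :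
    d₀ + ν ≤ c.support.card :=
  hartmann_tzeng_bound_general F E n α hα b m₁ m₂ hm₁ hm₂ d₀ ν hd₀ c hc hcdeg hzero
end

section
/- Let F be a finite field and E an extension field of F, let n be a positive integer, α ∈ E of multiplicative order exactly n, and b an integer. Let h, f ∈ F[X], let e ∈ F[X] with deg e < n have support set 𝓔, and define Ω(X) = Σ_{i∈𝓔} e_i α^{i b} h(α^i X) ∏_{j∈𝓔, j≠i} f(α^j X) ∈ E[X]. Let ℓ ∈ 𝓔 and let β ∈ E satisfy f(α^ℓ β) = 0 and f(α^j β) ≠ 0 for every j ∈ 𝓔 with j ≠ ℓ, and suppose h(α^ℓ β) ≠ 0. Then the error value e_ℓ is given by e_ℓ = Ω(β) / ( α^{ℓ b} · h(α^ℓ β) · ∏_{j∈𝓔, j≠ℓ} f(α^j β) ). -/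
/-!
Evaluating `Ω` at `β` kills every summand except the `ℓ`-th one, because each other summand
contains the factor `f(α^ℓ β) = 0`. The surviving summand is `e_ℓ` times the denominator, which
is nonzero since `α` is a unit, `h(α^ℓ β) ≠ 0` and `f(α^j β) ≠ 0` for `j ≠ ℓ`.
-/

open Polynomial

@[simp]
theorem eval_polySubst {F E : Type*} [CommRing F] [CommRing E]
    (φ : F →+* E) (f : F[X]) (γ x : E) :
    (polySubst φ f γ).eval x = (f.map φ).eval (γ * x) := by
  simp [polySubst, eval_comp]

theorem Finset.sum_mul_prod_erase_eq_of_eq_zero {ι R : Type*} [CommSemiring R] [DecidableEq ι]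
    {s : Finset ι} {c u : ι → R} {ℓ : ι} (hℓ : ℓ ∈ s) (hu : u ℓ = 0) :
    ∑ i ∈ s, c i * ∏ j ∈ s.erase i, u j = c ℓ * ∏ j ∈ s.erase ℓ, u j := by
  refine Finset.sum_eq_single_of_mem ℓ hℓ fun i _ hiℓ ↦ ?_
  rw [Finset.prod_eq_zero (Finset.mem_erase.2 ⟨Ne.symm hiℓ, hℓ⟩) hu, mul_zero]

theorem ne_zero_of_orderOf_pos {M₀ : Type*} [MonoidWithZero M₀] [Nontrivial M₀] {x : M₀}
    (hx : 0 < orderOf x) : x ≠ 0 := by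
  rintro rfl
  simp [orderOf_zero] at hx

theorem generalized_error_evaluation_general
    (F E : Type*) [Field F] [Field E] [Algebra F E]
    (n : ℕ) (hn : 0 < n) (α : E) (hα : orderOf α = n) (b : ℤ)
    (h f : Polynomial F)
    (e : Polynomial F)
    (Ω : Polynomial E)
    (hΩ : Ω = ∑ i ∈ e.support,
      Polynomial.C (algebraMap F E (e.coeff i) * α ^ ((i : ℤ) * b)) *
        polySubst (algebraMap F E) h (α ^ (i : ℤ)) *
        ∏ j ∈ e.support.erase i, polySubst (algebraMap F E) f (α ^ (j : ℤ)))
    (ℓ : ℕ) (hℓ : ℓ ∈ e.support) (β : E)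
    (hroot : (f.map (algebraMap F E)).eval (α ^ (ℓ : ℤ) * β) = 0)
    (hnonroot : ∀ j ∈ e.support, j ≠ ℓ →
      (f.map (algebraMap F E)).eval (α ^ (j : ℤ) * β) ≠ 0)
    (hh : (h.map (algebraMap F E)).eval (α ^ (ℓ : ℤ) * β) ≠ 0) :
    algebraMap F E (e.coeff ℓ) =
      Ω.eval β /
        (α ^ ((ℓ : ℤ) * b) * (h.map (algebraMap F E)).eval (α ^ (ℓ : ℤ) * β) *
          ∏ j ∈ e.support.erase ℓ,
            (f.map (algebraMap F E)).eval (α ^ (j : ℤ) * β)) := by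
  have hα₀ : α ≠ 0 := ne_zero_of_orderOf_pos (hα ▸ hn)
  have hΩβ : Ω.eval β = algebraMap F E (e.coeff ℓ) *
      (α ^ ((ℓ : ℤ) * b) * (h.map (algebraMap F E)).eval (α ^ (ℓ : ℤ) * β) *
        ∏ j ∈ e.support.erase ℓ, (f.map (algebraMap F E)).eval (α ^ (j : ℤ) * β)) := by
    simp only [hΩ, eval_finsetSum, eval_mul, eval_C, eval_prod, eval_polySubst]
    rw [Finset.sum_mul_prod_erase_eq_of_eq_zero hℓ hroot]
    ring
  have hden : α ^ ((ℓ : ℤ) * b) * (h.map (algebraMap F E)).eval (α ^ (ℓ : ℤ) * β) *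
      ∏ j ∈ e.support.erase ℓ, (f.map (algebraMap F E)).eval (α ^ (j : ℤ) * β) ≠ 0 :=
    mul_ne_zero (mul_ne_zero (zpow_ne_zero _ hα₀) hh) <| Finset.prod_ne_zero_iff.2
      fun j hj ↦ hnonroot j (Finset.mem_of_mem_erase hj) (Finset.ne_of_mem_erase hj)
  rw [hΩβ, mul_div_cancel_right₀ _ hden]

/-- Lemma 6 (Generalized Error Evaluation), the generalization of Forney's
formula: the error value `e_ℓ` is `Ω(β)` divided by
`α^{ℓb}·h(α^ℓβ)·∏_{j∈𝓔, j≠ℓ} f(α^jβ)`. -/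
theorem generalized_error_evaluation
    (F E : Type*) [Field F] [Fintype F] [Field E] [Algebra F E]
    (n : ℕ) (hn : 0 < n) (α : E) (hα : orderOf α = n) (b : ℤ)
    (h f : Polynomial F)
    (e : Polynomial F) (hedeg : e.natDegree < n)
    (Ω : Polynomial E)
    (hΩ : Ω = ∑ i ∈ e.support,
      Polynomial.C (algebraMap F E (e.coeff i) * α ^ ((i : ℤ) * b)) *
        polySubst (algebraMap F E) h (α ^ (i : ℤ)) *
        ∏ j ∈ e.support.erase i, polySubst (algebraMap F E) f (α ^ (j : ℤ)))
    (ℓ : ℕ) (hℓ : ℓ ∈ e.support) (β : E)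
    (hroot : (f.map (algebraMap F E)).eval (α ^ (ℓ : ℤ) * β) = 0)
    (hnonroot : ∀ j ∈ e.support, j ≠ ℓ →
      (f.map (algebraMap F E)).eval (α ^ (j : ℤ) * β) ≠ 0)
    (hh : (h.map (algebraMap F E)).eval (α ^ (ℓ : ℤ) * β) ≠ 0) :
    algebraMap F E (e.coeff ℓ) =
      Ω.eval β /
        (α ^ ((ℓ : ℤ) * b) * (h.map (algebraMap F E)).eval (α ^ (ℓ : ℤ) * β) *
          ∏ j ∈ e.support.erase ℓ,
            (f.map (algebraMap F E)).eval (α ^ (j : ℤ) * β)) :=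
  generalized_error_evaluation_general F E n hn α hα b h f e Ω hΩ ℓ hℓ β hroot hnonroot hh
end

section
/- (Boston's bound 1 via rational functions.) Let F be a finite field and E an extension field of F, let n be a positive integer with gcd(n, 3) = 1, and let α ∈ E have multiplicative order exactly n. If c ∈ F[X] is nonzero with deg c < n and c(α^i) = 0 for all i ∈ {0, 1, 3, 4}, then the Hamming weight of c is at least 4. -/
/-!
Write `c = ∑ a_j X^j` over its support and put `x_j = α ^ j`, so that the hypothesis reads
`∑ a_j x_j ^ i = 0` for `i = 0, 1, 3, 4`. One or two terms are ruled out by the exponents `0, 1`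
alone. For three terms `x, y, z`, the exponents `0, 1, 3` force `x + y + z = 0`, and the same
argument at the inverse points (exponents `4, 3, 1`) forces `xy + yz + zx = 0`. Then `x, y, z`
are roots of `T ^ 3 - xyz`, so `x ^ 3 = y ^ 3`; but `α ^ 3` still has order `n` because
`gcd(n, 3) = 1`, so the cubes `x_j ^ 3 = (α ^ 3) ^ j` with `j < n` are distinct.
-/

open Polynomial

section WeightedPowerSums

variable {K : Type*} [Field K] {u v w x y z : K}

theorem add_add_eq_zero_of_weighted_pow_sums (hu : u ≠ 0) (hxy : x ≠ y) (hxz : x ≠ z)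
    (h0 : u + v + w = 0) (h1 : u * x + v * y + w * z = 0)
    (h3 : u * x ^ 3 + v * y ^ 3 + w * z ^ 3 = 0) : x + y + z = 0 := by
  -- `(T - y) (T - z) (T + y + z)` has no `T ^ 2` term, so it pairs with the exponents `0, 1, 3`
  have key : u * ((x - y) * (x - z) * (x + y + z)) = 0 := by
    linear_combination h3 + (y * z - (y + z) ^ 2) * h1 + y * z * (y + z) * h0
  simpa [hu, sub_eq_zero, hxy, hxz] using key

theorem mul_add_mul_add_mul_eq_zero_of_weighted_pow_sums (hu : u ≠ 0) (hx : x ≠ 0)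
    (hy : y ≠ 0) (hz : z ≠ 0) (hxy : x ≠ y) (hxz : x ≠ z) (h1 : u * x + v * y + w * z = 0)
    (h3 : u * x ^ 3 + v * y ^ 3 + w * z ^ 3 = 0)
    (h4 : u * x ^ 4 + v * y ^ 4 + w * z ^ 4 = 0) : x * y + y * z + z * x = 0 := by
  have hinv := add_add_eq_zero_of_weighted_pow_sums (u := u * x ^ 4) (v := v * y ^ 4)
    (w := w * z ^ 4) (by positivity) (inv_injective.ne hxy) (inv_injective.ne hxz) h4
    (by field_simp; linear_combination h3) (by field_simp; linear_combination h1)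
  field_simp at hinv
  linear_combination hinv

theorem pow_three_eq_of_add_add_eq_zero (hs : x + y + z = 0) (hp : x * y + y * z + z * x = 0) :
    x ^ 3 = y ^ 3 := by
  linear_combination (x - y) * (x + y) * hs - (x - y) * hp

theorem pow_three_eq_of_weighted_pow_sums (hu : u ≠ 0) (hx : x ≠ 0) (hy : y ≠ 0)
    (hz : z ≠ 0) (hxy : x ≠ y) (hxz : x ≠ z) (h0 : u + v + w = 0)
    (h1 : u * x + v * y + w * z = 0)
    (h3 : u * x ^ 3 + v * y ^ 3 + w * z ^ 3 = 0)
    (h4 : u * x ^ 4 + v * y ^ 4 + w * z ^ 4 = 0) : x ^ 3 = y ^ 3 :=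
  pow_three_eq_of_add_add_eq_zero (add_add_eq_zero_of_weighted_pow_sums hu hxy hxz h0 h1 h3)
    (mul_add_mul_add_mul_eq_zero_of_weighted_pow_sums hu hx hy hz hxy hxz h1 h3 h4)

theorem four_le_card_of_sum_mul_pow_eq_zero {ι : Type*} {S : Finset ι} {a x : ι → K}
    (hS : S.Nonempty) (ha : ∀ j ∈ S, a j ≠ 0) (hx : ∀ j ∈ S, x j ≠ 0)
    (hx3 : Set.InjOn (fun j ↦ x j ^ 3) S)
    (h : ∀ i ∈ ({0, 1, 3, 4} : Finset ℕ), ∑ j ∈ S, a j * x j ^ i = 0) : 4 ≤ S.card := by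
  classical
  have hxinj : Set.InjOn x S := fun j hj k hk hjk ↦ hx3 hj hk (by simp only [hjk])
  have h0 := h 0 (by simp)
  have h1 := h 1 (by simp)
  have hpos := Finset.card_pos.mpr hS
  by_contra! hlt
  interval_cases hcard : S.card
  · obtain ⟨j, rfl⟩ := Finset.card_eq_one.mp hcard
    simp_all
  · obtain ⟨j, k, hjk, rfl⟩ := Finset.card_eq_two.mp hcard
    simp only [Finset.sum_pair hjk, pow_zero, mul_one, pow_one] at h0 h1
    have : a j * (x j - x k) = 0 := by linear_combination h1 - x k * h0
    simp_all [sub_eq_zero, hxinj.eq_iff]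
  · obtain ⟨j, k, l, hjk, hjl, hkl, rfl⟩ := Finset.card_eq_three.mp hcard
    simp only [Finset.mem_insert, Finset.mem_singleton, forall_eq_or_imp, forall_eq] at ha hx
    have hsum : ∀ i ∈ ({0, 1, 3, 4} : Finset ℕ),
        a j * x j ^ i + a k * x k ^ i + a l * x l ^ i = 0 := by
      intro i hi
      rw [← h i hi, Finset.sum_insert (by simp [hjk, hjl]), Finset.sum_pair hkl, add_assoc]
    have hcube := pow_three_eq_of_weighted_pow_sums ha.1 hx.1 hx.2.1 hx.2.2
      (hxinj.ne (by simp) (by simp) hjk) (hxinj.ne (by simp) (by simp) hjl)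
      (by simpa using hsum 0 (by simp)) (by simpa using hsum 1 (by simp))
      (hsum 3 (by simp)) (hsum 4 (by simp))
    exact hjk (hx3 (by simp) (by simp) hcube)

end WeightedPowerSums

theorem boston_bound_one_general
    (F E : Type*) [Field F] [Field E] [Algebra F E]
    (n : ℕ) (hn3 : Nat.gcd n 3 = 1)
    (α : E) (hα : orderOf α = n)
    (c : Polynomial F) (hc : c ≠ 0) (hcdeg : c.natDegree < n)
    (hzero : ∀ i ∈ ({0, 1, 3, 4} : Finset ℕ),
      (c.map (algebraMap F E)).eval (α ^ i) = 0) :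
    4 ≤ c.support.card := by
  have hα0 : α ≠ 0 := by
    rintro rfl
    rw [orderOf_zero] at hα
    omega
  have hα3 : orderOf (α ^ 3) = n := by
    rw [Nat.Coprime.orderOf_pow (hα ▸ hn3), hα]
  have hsupp : ∀ j ∈ c.support, j < orderOf (α ^ 3) := fun j hj ↦
    hα3 ▸ (le_natDegree_of_mem_supp j hj).trans_lt hcdeg
  refine four_le_card_of_sum_mul_pow_eq_zero (a := fun j ↦ algebraMap F E (c.coeff j))
    (x := (α ^ ·)) (nonempty_support_iff.mpr hc)
    (fun j hj ↦ (_root_.map_ne_zero _).mpr (mem_support_iff.mp hj))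
    (fun j _ ↦ pow_ne_zero j hα0)
    (fun j hj k hk hjk ↦ pow_injOn_Iio_orderOf (hsupp j hj) (hsupp k hk) ?_) fun i hi ↦ ?_
  · simpa only [← pow_mul, mul_comm] using hjk
  · rw [← hzero i hi, eval_map_algebraMap, aeval_def, eval₂_eq_sum, sum_def]
    simp only [pow_right_comm]

/-- Boston's bound 1 via rational functions: if `gcd(n, 3) = 1` and the
codeword `c` vanishes at `α^i` for `i ∈ {0, 1, 3, 4}`, then `wt(c) ≥ 4`. -/
theorem boston_bound_one
    (F E : Type*) [Field F] [Fintype F] [Field E] [Algebra F E]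
    (n : ℕ) (hn : 0 < n) (hn3 : Nat.gcd n 3 = 1)
    (α : E) (hα : orderOf α = n)
    (c : Polynomial F) (hc : c ≠ 0) (hcdeg : c.natDegree < n)
    (hzero : ∀ i ∈ ({0, 1, 3, 4} : Finset ℕ),
      (c.map (algebraMap F E)).eval (α ^ i) = 0) :
    4 ≤ c.support.card :=
  boston_bound_one_general F E n hn3 α hα c hc hcdeg hzero
end

section
/- (Boston's bound 5 via rational functions.) Let F be a finite field and E an extension field of F, let n be a positive integer with gcd(n, 3) = 1, and let α ∈ E have multiplicative order exactly n. If c ∈ F[X] is nonzero with deg c < n and c(α^i) = 0 for all i ∈ {0, 1, 3, 4, 6}, then the Hamming weight of c is at least 5. -/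
/-!
Write the syndromes as power sums `p i = ∑ a_j x_j ^ i` over the support of `c`, with nodes
`x_j = α ^ j`; as `gcd(n, 3) = 1`, even the cubes `x_j ^ 3` are pairwise distinct. With at most
three nodes, `p 0 = p 3 = p 6 = 0` is a Vandermonde system in the cubes. With four nodes,
`p 2 ≠ 0` by the Vandermonde system `p 0 = p 1 = p 2 = p 3 = 0`, and the linear recurrence that
the node polynomial `P = ∏ (X - x_j)` imposes on `p` forces `P = (X + P₃)(X³ + P₁)`. A root of
`X³ + P₁` is determined by its cube, so `P` would have at most two distinct roots.
-/

open Polynomial Finset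

lemma Finset.card_filter_eq_le_one_of_injOn {ι β : Type*} [DecidableEq β] {S : Finset ι}
    {f : ι → β} (hf : Set.InjOn f S) (w : β) : #{j ∈ S | f j = w} ≤ 1 :=
  card_le_one.mpr fun j hj k hk => by
    rw [mem_filter] at hj hk
    exact hf hj.1 hk.1 (hj.2.trans hk.2.symm)

lemma Finset.card_le_two_of_forall_eq_or_eq {ι β γ : Type*} {S : Finset ι} {f : ι → β}
    {g : ι → γ} (hf : Set.InjOn f S) (hg : Set.InjOn g S) {u : β} {v : γ}
    (h : ∀ j ∈ S, f j = u ∨ g j = v) : #S ≤ 2 := by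
  classical
  have hcover : S ⊆ {j ∈ S | f j = u} ∪ {j ∈ S | g j = v} := fun j hj => by
    simpa [hj] using h j hj
  calc #S ≤ #({j ∈ S | f j = u} ∪ {j ∈ S | g j = v}) := card_le_card hcover
    _ ≤ #{j ∈ S | f j = u} + #{j ∈ S | g j = v} := card_union_le _ _
    _ ≤ 2 := add_le_add (card_filter_eq_le_one_of_injOn hf u)
      (card_filter_eq_le_one_of_injOn hg v)

section PowerSums

variable {ι E : Type*} [Field E]

lemma sum_mul_pow_mul_eval_eq (S : Finset ι) (a x : ι → E) {Q : E[X]} {N : ℕ}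
    (hQ : Q.natDegree < N) (i : ℕ) :
    ∑ j ∈ S, a j * x j ^ i * Q.eval (x j) =
      ∑ m ∈ range N, Q.coeff m * ∑ j ∈ S, a j * x j ^ (i + m) := by
  simp_rw [eval_eq_sum_range' hQ, mul_sum]
  rw [sum_comm]
  exact sum_congr rfl fun m _ => sum_congr rfl fun j _ => by ring

variable {S : Finset ι} {a x : ι → E}

lemma eq_zero_of_sum_mul_pow_eq_zero (hx : Set.InjOn x S)
    (h : ∀ m < #S, ∑ j ∈ S, a j * x j ^ m = 0) {k : ι} (hk : k ∈ S) : a k = 0 := by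
  classical
  set L := Lagrange.nodal (S.erase k) x
  have hL : L.natDegree < #S := by
    rw [Lagrange.natDegree_nodal, card_erase_of_mem hk]
    exact Nat.sub_lt (card_pos.mpr ⟨k, hk⟩) one_pos
  have hLk : L.eval (x k) ≠ 0 := Lagrange.eval_nodal_not_at_node fun l hl hkl =>
    (mem_erase.mp hl).1 (hx (mem_of_mem_erase hl) hk hkl.symm)
  have hsingle : ∑ j ∈ S, a j * x j ^ 0 * L.eval (x j) = a k * L.eval (x k) := by
    refine (sum_eq_single_of_mem k hk fun j hj hjk => ?_).trans (by rw [pow_zero, mul_one])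
    rw [Lagrange.eval_nodal_at_node (mem_erase.mpr ⟨hjk, hj⟩), mul_zero]
  have hvanish : ∑ j ∈ S, a j * x j ^ 0 * L.eval (x j) = 0 := by
    rw [sum_mul_pow_mul_eval_eq S a x hL 0]
    exact sum_eq_zero fun m hm => by rw [zero_add, h m (mem_range.mp hm), mul_zero]
  exact (mul_eq_zero.mp (hsingle ▸ hvanish)).resolve_right hLk

lemma exists_forall_eq_or_pow_three_eq (hS : #S = 4)
    (h : ∀ i ∈ ({0, 1, 3, 4, 6} : Finset ℕ), ∑ j ∈ S, a j * x j ^ i = 0)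
    (h2 : ∑ j ∈ S, a j * x j ^ 2 ≠ 0) :
    ∃ u v : E, ∀ j ∈ S, x j = u ∨ x j ^ 3 = v := by
  set P := Lagrange.nodal S x
  set p : ℕ → E := fun i => ∑ j ∈ S, a j * x j ^ i
  have hdeg : P.natDegree < 5 := by rw [Lagrange.natDegree_nodal, hS]; norm_num
  have hq4 : P.coeff 4 = 1 := by
    simpa [P, Lagrange.natDegree_nodal, hS] using
      (Lagrange.nodal_monic (s := S) (v := x)).coeff_natDegree
  have hrec (i : ℕ) : ∑ m ∈ range 5, P.coeff m * p (i + m) = 0 := by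
    rw [← sum_mul_pow_mul_eval_eq S a x hdeg i]
    exact sum_eq_zero fun j hj => by rw [Lagrange.eval_nodal_at_node hj, mul_zero]
  have hp (i : ℕ) (hi : i ∈ ({0, 1, 3, 4, 6} : Finset ℕ)) : p i = 0 := h i hi
  have e0 := hrec 0
  have e1 := hrec 1
  have e2 := hrec 2
  simp only [sum_range_succ, sum_range_zero, Nat.reduceAdd, hq4, hp 0 (by decide),
    hp 1 (by decide), hp 3 (by decide), hp 4 (by decide), hp 6 (by decide), mul_zero,
    zero_add, add_zero, one_mul] at e0 e1 e2
  have hq2 : P.coeff 2 = 0 := (mul_eq_zero.mp e0).resolve_right h2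
  have hq0 : P.coeff 0 = P.coeff 3 * P.coeff 1 :=
    mul_right_cancel₀ h2 (by linear_combination e2 - P.coeff 3 * e1)
  refine ⟨-P.coeff 3, -P.coeff 1, fun j hj => ?_⟩
  have hroot : P.eval (x j) = 0 := Lagrange.eval_nodal_at_node hj
  rw [eval_eq_sum_range' hdeg] at hroot
  simp only [sum_range_succ, sum_range_zero, hq4, hq2, hq0] at hroot
  have hfactor : (x j + P.coeff 3) * (x j ^ 3 + P.coeff 1) = 0 := by
    linear_combination hroot
  exact (mul_eq_zero.mp hfactor).imp eq_neg_of_add_eq_zero_left eq_neg_of_add_eq_zero_left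

theorem five_le_card_of_sum_mul_pow_eq_zero (hx : Set.InjOn (fun j => x j ^ 3) S)
    (ha : ∀ j ∈ S, a j ≠ 0) (hS : S.Nonempty)
    (h : ∀ i ∈ ({0, 1, 3, 4, 6} : Finset ℕ), ∑ j ∈ S, a j * x j ^ i = 0) : 5 ≤ #S := by
  obtain ⟨k, hk⟩ := hS
  have hx' : Set.InjOn x S := Set.InjOn.of_comp (g := (· ^ 3)) hx
  by_contra! hcard
  rcases (show #S ≤ 3 ∨ #S = 4 by omega) with hS3 | hS4
  · refine ha k hk (eq_zero_of_sum_mul_pow_eq_zero hx (fun m hm => ?_) hk)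
    simp_rw [← pow_mul]
    have hm3 : m < 3 := by omega
    exact h (3 * m) (by interval_cases m <;> decide)
  · have h2 : ∑ j ∈ S, a j * x j ^ 2 ≠ 0 := fun h2 =>
      ha k hk (eq_zero_of_sum_mul_pow_eq_zero hx' (fun m hm => by
        rw [hS4] at hm
        interval_cases m
        exacts [h 0 (by decide), h 1 (by decide), h2, h 3 (by decide)]) hk)
    obtain ⟨u, v, huv⟩ := exists_forall_eq_or_pow_three_eq hS4 h h2
    have := card_le_two_of_forall_eq_or_eq hx' hx huv
    omega

end PowerSums

theorem boston_bound_five_general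
    (F E : Type*) [Field F] [Field E] [Algebra F E]
    (n : ℕ) (hn3 : Nat.gcd n 3 = 1)
    (α : E) (hα : orderOf α = n)
    (c : Polynomial F) (hc : c ≠ 0) (hcdeg : c.natDegree < n)
    (hzero : ∀ i ∈ ({0, 1, 3, 4, 6} : Finset ℕ),
      (c.map (algebraMap F E)).eval (α ^ i) = 0) :
    5 ≤ c.support.card := by
  have hord : orderOf (α ^ 3) = n := hα ▸ Nat.Coprime.orderOf_pow (hα ▸ hn3)
  have hcube : Set.InjOn (fun j => (α ^ j) ^ 3) c.support := by
    intro j hj k hk hjk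
    simp only [← pow_right_comm α 3] at hjk
    have hlt {i} (hi : i ∈ c.support) : i ∈ Set.Iio (orderOf (α ^ 3)) :=
      hord ▸ (le_natDegree_of_mem_supp i hi).trans_lt hcdeg
    exact pow_injOn_Iio_orderOf (hlt hj) (hlt hk) hjk
  refine five_le_card_of_sum_mul_pow_eq_zero hcube
    (fun j hj => (_root_.map_ne_zero (algebraMap F E)).mpr (mem_support_iff.mp hj))
    (support_nonempty.mpr hc) fun i hi => ?_
  rw [← hzero i hi, eval_map, eval₂_eq_sum, sum_def]
  simp_rw [pow_right_comm α]

/-- Boston's bound 5 via rational functions: if `gcd(n, 3) = 1` and the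
codeword `c` vanishes at `α^i` for `i ∈ {0, 1, 3, 4, 6}`, then `wt(c) ≥ 5`. -/
theorem boston_bound_five
    (F E : Type*) [Field F] [Fintype F] [Field E] [Algebra F E]
    (n : ℕ) (hn : 0 < n) (hn3 : Nat.gcd n 3 = 1)
    (α : E) (hα : orderOf α = n)
    (c : Polynomial F) (hc : c ≠ 0) (hcdeg : c.natDegree < n)
    (hzero : ∀ i ∈ ({0, 1, 3, 4, 6} : Finset ℕ),
      (c.map (algebraMap F E)).eval (α ^ i) = 0) :
    5 ≤ c.support.card :=
  boston_bound_five_general F E n hn3 α hα c hc hcdeg hzero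
end

section
/- (Boston's bound 7 via rational functions.) Let F be a finite field and E an extension field of F, let n be a positive integer with gcd(n, 3) = 1, and let α ∈ E have multiplicative order exactly n. If c ∈ F[X] is nonzero with deg c < n and c(α^i) = 0 for all i ∈ {0, 1, 3, 4, 6, 7}, then the Hamming weight of c is at least 6. -/
open Polynomial

/-!
With `λ = 0, 1, -1, 0, 1, -1, …` the coefficients of `x / (1 + x + x²)`, the sequence
`k ↦ c(α^(k-1)) λ(k)` is a sum over the support of `c` of the sequences `c_e β^(k-1) λ(k)`,
`β = α^e`, each a solution of `u (k+2) + β u (k+1) + β² u k = 0`. A sum of `w` such solutions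
with `2w` consecutive zero terms vanishes identically, and if `wt(c) ≤ 5` the zeros of `λ` at
multiples of `3` together with the six prescribed zeros of `c` supply the ten initial zeros.
As `3 ∤ n`, every `α^r` equals some `α^(k-1)` with `λ(k) ≠ 0`, so `c` vanishes at all `n`
distinct powers of `α`, impossible for `deg c < n`.
-/

/-- The coefficients `0, 1, -1, 0, 1, -1, …` of `x / (1 + x + x²) = (x - x²) / (1 - x³)`. -/
def periodicWeight (k : ℕ) : ℤ :=
  if k % 3 = 0 then 0 else if k % 3 = 1 then 1 else -1

lemma periodicWeight_add_add_eq_zero (k : ℕ) :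
    periodicWeight (k + 2) + periodicWeight (k + 1) + periodicWeight k = 0 := by
  unfold periodicWeight; split_ifs <;> omega

lemma periodicWeight_eq_zero_of_dvd {k : ℕ} (hk : 3 ∣ k) : periodicWeight k = 0 := by
  simp [periodicWeight, Nat.mod_eq_zero_of_dvd hk]

lemma isUnit_periodicWeight {k : ℕ} (hk : ¬ 3 ∣ k) : IsUnit (periodicWeight k) := by
  rw [Int.isUnit_iff]; unfold periodicWeight; split_ifs <;> omega

section

variable {R : Type*} [CommRing R]

def recOp (a b : R) (u : ℕ → R) : ℕ → R :=
  fun k => u (k + 2) + a * u (k + 1) + b * u k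

lemma recOp_comm (a b a' b' : R) (u : ℕ → R) :
    recOp a b (recOp a' b' u) = recOp a' b' (recOp a b u) := by
  funext k; simp only [recOp]; ring

lemma recOp_sum {ι : Type*} (a b : R) (t : Finset ι) (u : ι → ℕ → R) :
    recOp a b (fun k => ∑ e ∈ t, u e k) = fun k => ∑ e ∈ t, recOp a b (u e) k := by
  funext k; simp only [recOp, Finset.sum_add_distrib, Finset.mul_sum]

lemma eq_zero_of_recOp_eq_zero {a b : R} {u : ℕ → R} (hu : recOp a b u = 0)
    (h0 : u 0 = 0) (h1 : u 1 = 0) : u = 0 := by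
  funext k
  induction k using Nat.twoStepInduction with
  | zero => exact h0
  | one => exact h1
  | more k hk hk1 =>
    have := congrFun hu k
    simp only [recOp, Pi.zero_apply] at this hk hk1 ⊢
    rw [hk, hk1] at this
    simpa using this

/-- Induction on `t`: the recurrence operator of one summand kills it and maps the others to
solutions of their own recurrences. -/
theorem sum_eq_zero_of_recOp_eq_zero {ι : Type*} [DecidableEq ι] (a b : ι → R) (t : Finset ι)
    (u : ι → ℕ → R) (hu : ∀ e ∈ t, recOp (a e) (b e) (u e) = 0)
    (hinit : ∀ k < 2 * t.card, ∑ e ∈ t, u e k = 0) (k : ℕ) : ∑ e ∈ t, u e k = 0 := by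
  induction t using Finset.induction_on generalizing u k with
  | empty => simp
  | @insert e t he ih =>
    set s : ℕ → R := fun k => ∑ x ∈ insert e t, u x k with hs
    have hcard : (insert e t).card = t.card + 1 := Finset.card_insert_of_notMem he
    have hrec : recOp (a e) (b e) s = fun k => ∑ x ∈ t, recOp (a e) (b e) (u x) k := by
      rw [hs, recOp_sum]
      funext k
      rw [Finset.sum_insert he, hu e (Finset.mem_insert_self e t), Pi.zero_apply, zero_add]
    have hs_rec : recOp (a e) (b e) s = 0 := by
      rw [hrec]
      funext k
      refine ih _ (fun x hx => ?_) (fun k hk => ?_) k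
      · rw [recOp_comm, hu x (Finset.mem_insert_of_mem hx)]
        funext k; simp [recOp]
      · rw [← congrFun hrec k]
        simp only [recOp, hs]
        rw [hinit k (by omega), hinit (k + 1) (by omega), hinit (k + 2) (by omega)]
        ring
    exact congrFun (eq_zero_of_recOp_eq_zero hs_rec (hinit 0 (by omega)) (hinit 1 (by omega))) k

/-- `x ↦ 1 + β x + β² x²` is `1 + x + x²` rescaled by `β`, so `β^k` times the coefficients of
`x / (1 + x + x²)` are those of `x / (1 + β x + β² x²)`. -/
lemma recOp_pow_mul_periodicWeight (β γ : R) :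
    recOp β (β ^ 2) (fun k => γ * β ^ k * periodicWeight k) = 0 := by
  funext k
  have hsum := congrArg (Int.cast : ℤ → R) (periodicWeight_add_add_eq_zero k)
  push_cast at hsum
  simp only [recOp, Pi.zero_apply]
  linear_combination γ * β ^ (k + 2) * hsum

lemma eval_pow_mul_periodicWeight_eq_sum (p : R[X]) (α : R) (m k : ℕ) :
    p.eval (α ^ (k + m)) * periodicWeight k
      = ∑ e ∈ p.support, p.coeff e * (α ^ e) ^ m * (α ^ e) ^ k * periodicWeight k := by
  rw [eval_eq_sum, Polynomial.sum_def, Finset.sum_mul]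
  refine Finset.sum_congr rfl fun e _ => ?_
  ring

/-- Here `α^(k+m) = α^(k-1)` for `k ≥ 1`; among `k = 0, …, 9` the weight vanishes at multiples
of `3`, and `p` at the other six `α^(k-1)`. -/
lemma eval_pow_mul_periodicWeight_eq_zero {p : R[X]} {α : R} {m : ℕ} (hα : α ^ (m + 1) = 1)
    (hp : p.support.card ≤ 5)
    (hzero : ∀ i ∈ ({0, 1, 3, 4, 6, 7} : Finset ℕ), p.eval (α ^ i) = 0) (k : ℕ) :
    p.eval (α ^ (k + m)) * periodicWeight k = 0 := by
  classical
  rw [eval_pow_mul_periodicWeight_eq_sum]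
  refine sum_eq_zero_of_recOp_eq_zero (fun e => α ^ e) (fun e => (α ^ e) ^ 2) p.support _
    (fun e _ => recOp_pow_mul_periodicWeight _ _) (fun k hk => ?_) k
  rw [← eval_pow_mul_periodicWeight_eq_sum]
  by_cases h3 : 3 ∣ k
  · rw [periodicWeight_eq_zero_of_dvd h3, Int.cast_zero, mul_zero]
  obtain ⟨j, rfl⟩ : ∃ j, k = j + 1 := ⟨k - 1, by omega⟩
  rw [show j + 1 + m = j + (m + 1) by ring, pow_add, hα, mul_one,
    hzero j (by simp only [Finset.mem_insert, Finset.mem_singleton]; omega), zero_mul]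

lemma eval_pow_eq_zero_of_coprime {p : R[X]} {α : R} {m : ℕ} (hα : α ^ (m + 1) = 1)
    (h3 : Nat.Coprime (m + 1) 3) (h : ∀ k, p.eval (α ^ (k + m)) * periodicWeight k = 0)
    (r : ℕ) : p.eval (α ^ r) = 0 := by
  have hm3 : ¬ 3 ∣ m + 1 := (Nat.Prime.coprime_iff_not_dvd Nat.prime_three).1 h3.symm
  obtain ⟨j, hj⟩ : ∃ j, ¬ 3 ∣ r + 1 + j * (m + 1) := by
    by_contra! hdvd
    have := hdvd 0; have := hdvd 1; have := hdvd 2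
    omega
  have hk := h (r + 1 + j * (m + 1))
  rw [show r + 1 + j * (m + 1) + m = r + (m + 1) * (j + 1) by ring, pow_add, pow_mul, hα,
    one_pow, mul_one] at hk
  exact ((isUnit_periodicWeight hj).map (Int.castRingHom R)).mul_left_eq_zero.1 hk

lemma Polynomial.eq_zero_of_eval_pow_eq_zero [IsDomain R] {p : R[X]} {α : R}
    (hdeg : p.natDegree < orderOf α) (h : ∀ r, p.eval (α ^ r) = 0) : p = 0 :=
  p.eq_zero_of_natDegree_lt_card_of_eval_eq_zero (f := fun i : Fin (orderOf α) => α ^ (i : ℕ))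
    (fun i j hij => Fin.ext (pow_injOn_Iio_orderOf i.2 j.2 hij)) (fun i => h i)
    (by rwa [Fintype.card_fin])

theorem six_le_card_support [IsDomain R] {p : R[X]} {α : R} (hp : p ≠ 0)
    (hdeg : p.natDegree < orderOf α) (h3 : Nat.Coprime (orderOf α) 3)
    (hzero : ∀ i ∈ ({0, 1, 3, 4, 6, 7} : Finset ℕ), p.eval (α ^ i) = 0) :
    6 ≤ p.support.card := by
  by_contra! hcard
  obtain ⟨m, hm⟩ := Nat.exists_eq_add_one_of_ne_zero (n := orderOf α) (by omega)
  have hα : α ^ (m + 1) = 1 := hm ▸ pow_orderOf_eq_one α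
  refine hp (Polynomial.eq_zero_of_eval_pow_eq_zero hdeg fun r => ?_)
  exact eval_pow_eq_zero_of_coprime hα (hm ▸ h3)
    (eval_pow_mul_periodicWeight_eq_zero hα (by omega) hzero) r

end

theorem boston_bound_seven_general
    (F E : Type*) [Field F] [Field E] [Algebra F E]
    (n : ℕ) (hn3 : Nat.gcd n 3 = 1)
    (α : E) (hα : orderOf α = n)
    (c : Polynomial F) (hc : c ≠ 0) (hcdeg : c.natDegree < n)
    (hzero : ∀ i ∈ ({0, 1, 3, 4, 6, 7} : Finset ℕ),
      (c.map (algebraMap F E)).eval (α ^ i) = 0) :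
    6 ≤ c.support.card := by
  subst hα
  rw [← support_map_of_injective c (algebraMap F E).injective]
  exact six_le_card_support ((Polynomial.map_ne_zero_iff (algebraMap F E).injective).2 hc)
    (by rwa [natDegree_map]) hn3 hzero

/-- Boston's bound 7 via rational functions: if `gcd(n, 3) = 1` and the
codeword `c` vanishes at `α^i` for `i ∈ {0, 1, 3, 4, 6, 7}`, then `wt(c) ≥ 6`. -/
theorem boston_bound_seven
    (F E : Type*) [Field F] [Fintype F] [Field E] [Algebra F E]
    (n : ℕ) (hn : 0 < n) (hn3 : Nat.gcd n 3 = 1)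
    (α : E) (hα : orderOf α = n)
    (c : Polynomial F) (hc : c ≠ 0) (hcdeg : c.natDegree < n)
    (hzero : ∀ i ∈ ({0, 1, 3, 4, 6, 7} : Finset ℕ),
      (c.map (algebraMap F E)).eval (α ^ i) = 0) :
    6 ≤ c.support.card :=
  boston_bound_seven_general F E n hn3 α hα c hc hcdeg hzero
end

section
/- Let F be a finite field and E an extension field of F, let n be a positive integer with gcd(n, 3) = 1, and let α ∈ E have multiplicative order exactly n. If c ∈ F[X] is nonzero with deg c < n and c(α^i) = 0 for all i ∈ {−4, −2, −1, 1, 2, 4} (negative exponents interpreted through the order of α), then the Hamming weight of c is at least 5. -/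
/-!
Suppose `c` has at most four nonzero coefficients. Pad its support to four exponents `e_j < n`
and put `x_j = α ^ e_j`, `w_j = c_{e_j}`: then `∑ w_j x_j ^ i = 0` for
`i ∈ {-4, -2, -1, 1, 2, 4}`, and the cubes `x_j ^ 3` are distinct because `gcd(n, 3) = 1`.
Four of these equations, shifted to nonnegative exponents `k_a`, form a singular square system,
so the transposed system also has a nonzero solution: a nonzero polynomial supported on the
`X ^ k_a` that vanishes at every `x_j`, hence is a multiple of `m = ∏ (X - x_j)`. The exponent
sets `{0, 1, 3, 4}` and `{0, 2, 3, 5}` force `m = (X ^ 3 + m₁) (X + m₃)`, so two of the four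
`x_j` would share a cube.
-/

open Polynomial Lagrange Finset

theorem pow_pow_injOn_Iio_orderOf_of_coprime {M : Type*} [Monoid M] {x : M} {k : ℕ}
    (hk : (orderOf x).Coprime k) : (Set.Iio (orderOf x)).InjOn fun a => (x ^ a) ^ k := by
  intro a ha b hb hab
  have hx : IsOfFinOrder x := orderOf_pos_iff.1 (Nat.zero_lt_of_lt ha)
  simp only [← pow_mul, mul_comm _ k, hx.pow_eq_pow_iff_modEq] at hab
  exact (Nat.ModEq.cancel_left_of_coprime hk hab).eq_of_lt_of_lt ha hb

section

variable {E : Type*} [Field E]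

theorem eq_zero_of_forall_eval_pow_eq_zero {p : E[X]} {α : E} (hp : p.natDegree < orderOf α)
    (h : ∀ i < orderOf α, p.eval (α ^ i) = 0) : p = 0 :=
  eq_zero_of_natDegree_lt_card_of_eval_eq_zero p (f := fun i : Fin (orderOf α) => α ^ (i : ℕ))
    (fun i j hij => Fin.ext (pow_injOn_Iio_orderOf i.2 j.2 hij)) (fun i => h i i.2)
    (by simpa using hp)

theorem nodal_dvd_of_forall_eval_eq_zero {ι : Type*} [Fintype ι] {x : ι → E}
    (hx : Function.Injective x) {p : E[X]} (h : ∀ j, p.eval (x j) = 0) : nodal univ x ∣ p := by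
  rw [nodal_eq]
  exact Finset.prod_dvd_of_coprime ((pairwise_coprime_X_sub_C hx).set_pairwise _)
    fun j _ => dvd_iff_isRoot.2 (h j)

theorem exists_ne_zero_forall_sum_mul_pow_eq_zero {r : ℕ} (x w : Fin r → E) (hw : w ≠ 0)
    (k : Fin r → ℕ) (h : ∀ a, ∑ j, w j * x j ^ k a = 0) :
    ∃ v : Fin r → E, v ≠ 0 ∧ ∀ j, ∑ a, v a * x j ^ k a = 0 := by
  let M : Matrix (Fin r) (Fin r) E := Matrix.of fun a j => x j ^ k a
  have hM : M.det = 0 := Matrix.exists_mulVec_eq_zero_iff.1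
    ⟨w, hw, funext fun a => by simpa [M, Matrix.mulVec, dotProduct, mul_comm] using h a⟩
  obtain ⟨v, hv, hvM⟩ := Matrix.exists_vecMul_eq_zero_iff.2 hM
  exact ⟨v, hv, fun j => by simpa [M, Matrix.vecMul, dotProduct] using congrFun hvM j⟩

theorem exists_nodal_dvd_of_sum_mul_pow_eq_zero {r : ℕ} {x : Fin r → E}
    (hx : Function.Injective x) {w : Fin r → E} (hw : w ≠ 0) {k : Fin r → ℕ}
    (hk : Function.Injective k)
    (h : ∀ a, ∑ j, w j * x j ^ k a = 0) :
    ∃ p : E[X], p ≠ 0 ∧ (∀ i ∉ univ.image k, p.coeff i = 0) ∧ nodal univ x ∣ p := by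
  obtain ⟨v, hv, hvx⟩ := exists_ne_zero_forall_sum_mul_pow_eq_zero x w hw k h
  have hcoeff : ∀ i, (∑ a, monomial (k a) (v a)).coeff i = ∑ a, if k a = i then v a else 0 :=
    fun i => by simp only [finsetSum_coeff, coeff_monomial]
  refine ⟨∑ a, monomial (k a) (v a), fun h0 => hv (funext fun b => ?_), fun i hi => ?_,
    nodal_dvd_of_forall_eval_eq_zero hx fun j => by simpa [eval_finsetSum] using hvx j⟩
  · simpa [hcoeff, hk.eq_iff] using congrArg (coeff · (k b)) h0
  · rw [hcoeff]
    exact sum_eq_zero fun a _ => if_neg fun hai => hi (mem_image.2 ⟨a, mem_univ a, hai⟩)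

theorem Polynomial.Monic.coeff_eq_zero_of_dvd_of_natDegree_le {m p : E[X]} (hm : m.Monic)
    (hmp : m ∣ p) (hp : p ≠ 0) (hdeg : p.natDegree ≤ m.natDegree) {i : ℕ}
    (hi : p.coeff i = 0) : m.coeff i = 0 := by
  rw [eq_leadingCoeff_mul_of_monic_of_dvd_of_natDegree_le hm hmp hdeg, coeff_C_mul] at hi
  exact (mul_eq_zero.1 hi).resolve_left (leadingCoeff_ne_zero.2 hp)

theorem Polynomial.Monic.coeff_zero_eq_of_dvd {m p : E[X]} {k : ℕ} (hm : m.Monic)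
    (hmdeg : m.natDegree = k + 1) (hmp : m ∣ p) (hp : p ≠ 0) (hdeg : p.natDegree ≤ k + 2)
    (h1 : p.coeff 1 = 0) (hk : p.coeff (k + 1) = 0) : m.coeff 0 = m.coeff 1 * m.coeff k := by
  obtain ⟨q, rfl⟩ := hmp
  have hq : q ≠ 0 := right_ne_zero_of_mul hp
  have hqdeg : q.natDegree ≤ 1 := by
    rw [Polynomial.natDegree_mul hm.ne_zero hq, hmdeg] at hdeg
    omega
  obtain ⟨a, b, rfl⟩ : ∃ a b, q = C a * X + C b :=
    ⟨_, _, eq_X_add_C_of_natDegree_le_one hqdeg⟩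
  have coeff_succ : ∀ i,
      (m * (C a * X + C b)).coeff (i + 1) = a * m.coeff i + b * m.coeff (i + 1) := by
    intro i
    rw [mul_add, ← mul_assoc, coeff_add, coeff_mul_X, coeff_mul_C, coeff_mul_C]
    ring
  rw [coeff_succ] at h1 hk
  rw [← hmdeg, hm.coeff_natDegree, mul_one] at hk
  have ha : a ≠ 0 := by
    rintro rfl
    rw [zero_mul, zero_add] at hk
    exact hq (by simp [hk])
  exact mul_left_cancel₀ ha (by linear_combination h1 - m.coeff 1 * hk)

theorem card_le_two_of_forall_cube_add_mul_add_eq_zero {ι : Type*} [Fintype ι] {x : ι → E}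
    (hx : Function.Injective fun j => x j ^ 3) {s t : E}
    (h : ∀ j, (x j ^ 3 + s) * (x j + t) = 0) : Fintype.card ι ≤ 2 := by
  classical
  by_contra! hι
  obtain ⟨i, j, hij, hsame⟩ :=
    Fintype.exists_ne_map_eq_of_card_lt (fun j => decide (x j ^ 3 + s = 0)) (by simpa using hι)
  refine hij (hx ?_)
  by_cases hi : x i ^ 3 + s = 0
  · have hj : x j ^ 3 + s = 0 := by simpa [hi] using hsame.symm
    simp only [add_eq_zero_iff_eq_neg.1 hi, add_eq_zero_iff_eq_neg.1 hj]
  · have hj : x j ^ 3 + s ≠ 0 := by simpa [hi] using hsame.symm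
    have hxi := (mul_eq_zero.1 (h i)).resolve_left hi
    have hxj := (mul_eq_zero.1 (h j)).resolve_left hj
    simp only [add_eq_zero_iff_eq_neg.1 hxi, add_eq_zero_iff_eq_neg.1 hxj]

theorem eq_zero_of_sum_mul_zpow_eq_zero {x w : Fin 4 → E} (hx0 : ∀ j, x j ≠ 0)
    (hx3 : Function.Injective fun j => x j ^ 3)
    (h : ∀ i ∈ ({-4, -2, -1, 1, 2, 4} : Finset ℤ), ∑ j, w j * x j ^ i = 0) : w = 0 := by
  by_contra hw
  have hx : Function.Injective x := fun i j hij => hx3 (by simp only [hij])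
  set m := nodal univ x
  have hm : m.Monic := nodal_monic
  have hmdeg : m.natDegree = 4 := by simp [m, natDegree_nodal]
  have shift : ∀ (d : ℤ) (k : Fin 4 → ℕ), Function.Injective k →
      (∀ a, (k a : ℤ) + d ∈ ({-4, -2, -1, 1, 2, 4} : Finset ℤ)) →
      ∃ p : E[X], p ≠ 0 ∧ (∀ i ∉ univ.image k, p.coeff i = 0) ∧ m ∣ p := by
    intro d k hk hkd
    refine exists_nodal_dvd_of_sum_mul_pow_eq_zero hx (w := fun j => w j * x j ^ d) ?_ hk
      fun a => ?_
    · obtain ⟨j, hj⟩ := Function.ne_iff.1 hw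
      exact Function.ne_iff.2 ⟨j, mul_ne_zero hj (zpow_ne_zero d (hx0 j))⟩
    · simpa [mul_assoc, ← zpow_natCast, ← zpow_add₀ (hx0 _), add_comm] using h _ (hkd a)
  obtain ⟨p, hp, hpk, hmp⟩ := shift (-2) ![0, 1, 3, 4] (by decide) (by decide)
  have hm2 : m.coeff 2 = 0 := hm.coeff_eq_zero_of_dvd_of_natDegree_le hmp hp
    (hmdeg ▸ natDegree_le_iff_coeff_eq_zero.2 fun i hi =>
      hpk i (by simp [Fin.exists_fin_succ]; omega))
    (hpk 2 (by decide))
  obtain ⟨q, hq, hqk, hmq⟩ := shift (-4) ![0, 2, 3, 5] (by decide) (by decide)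
  have hm0 : m.coeff 0 = m.coeff 1 * m.coeff 3 := hm.coeff_zero_eq_of_dvd hmdeg hmq hq
    (natDegree_le_iff_coeff_eq_zero.2 fun i hi => hqk i (by simp [Fin.exists_fin_succ]; omega))
    (hqk 1 (by decide)) (hqk 4 (by decide))
  have hm4 : m.coeff 4 = 1 := hmdeg ▸ hm.coeff_natDegree
  have hroot : ∀ j, (x j ^ 3 + m.coeff 1) * (x j + m.coeff 3) = 0 := by
    intro j
    have hj := eval_eq_sum_range (p := m) (x j)
    rw [eval_nodal_at_node (mem_univ j), hmdeg] at hj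
    simp only [sum_range_succ, sum_range_zero, hm0, hm2, hm4] at hj
    linear_combination -hj
  simpa using card_le_two_of_forall_cube_add_mul_add_eq_zero hx3 hroot

end

theorem eq_zero_of_support_subset_of_eval_zpow_eq_zero {F E : Type*} [Field F] [Field E]
    [Algebra F E] {α : E} (hα3 : (orderOf α).Coprime 3) {c : F[X]} {t : Finset ℕ}
    (ht4 : #t = 4) (htα : t ⊆ range (orderOf α)) (hct : c.support ⊆ t)
    (hzero : ∀ i ∈ ({-4, -2, -1, 1, 2, 4} : Finset ℤ),
      (c.map (algebraMap F E)).eval (α ^ i) = 0) : c = 0 := by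
  have hα0 : α ≠ 0 := by
    have := card_le_card htα
    rw [ht4, card_range] at this
    exact (orderOf_pos_iff.1 (by omega)).isUnit.ne_zero
  let e : Fin 4 ≃ t := (t.equivFinOfCardEq ht4).symm
  have heval : ∀ y : E, (c.map (algebraMap F E)).eval y =
      ∑ j, algebraMap F E (c.coeff (e j)) * y ^ (e j : ℕ) := by
    intro y
    rw [eval_map, eval₂_eq_sum, sum_eq_of_subset _ (by simp) hct, ← sum_coe_sort t,
      ← e.sum_comp]
  have hx3 : Function.Injective fun j => (α ^ (e j : ℕ)) ^ 3 := fun i j hij =>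
    e.injective (Subtype.ext (pow_pow_injOn_Iio_orderOf_of_coprime hα3
      (mem_range.1 (htα (e i).2)) (mem_range.1 (htα (e j).2)) hij))
  have hw := eq_zero_of_sum_mul_zpow_eq_zero (w := fun j => algebraMap F E (c.coeff (e j)))
    (fun j => pow_ne_zero _ hα0) hx3 fun i hi => by
      have hcomm : ∀ m : ℕ, (α ^ i) ^ m = (α ^ m) ^ i := fun m => by
        rw [← zpow_natCast, ← zpow_mul, ← zpow_natCast α, ← zpow_mul, mul_comm]
      simpa only [heval, hcomm] using hzero i hi
  refine ext fun i => ?_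
  by_cases hi : i ∈ t
  · simpa [e] using congrFun hw (e.symm ⟨i, hi⟩)
  · exact notMem_support_iff.1 fun h => hi (hct h)

theorem reversible_class_one_general
    (F E : Type*) [Field F] [Field E] [Algebra F E]
    (n : ℕ) (hn3 : Nat.gcd n 3 = 1)
    (α : E) (hα : orderOf α = n)
    (c : Polynomial F) (hc : c ≠ 0) (hcdeg : c.natDegree < n)
    (hzero : ∀ i ∈ ({-4, -2, -1, 1, 2, 4} : Finset ℤ),
      (c.map (algebraMap F E)).eval (α ^ i) = 0) :
    5 ≤ c.support.card := by
  by_contra! hlt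
  subst hα
  rcases lt_or_ge (orderOf α) 4 with hn4 | hn4
  · -- here `orderOf α ∈ {1, 2}`, so `α` and `α ^ 2` exhaust the powers of `α`
    refine hc ((Polynomial.map_eq_zero (algebraMap F E)).1 (eq_zero_of_forall_eval_pow_eq_zero
      (by rwa [natDegree_map]) fun r hr => ?_))
    have h1 := hzero 1 (by decide)
    have h2 := hzero 2 (by decide)
    have hα2 : α ^ 2 = 1 := by
      rw [← orderOf_dvd_iff_pow_eq_one]
      interval_cases h : orderOf α <;> simp_all
    interval_cases h : orderOf α <;> interval_cases r <;> simp_all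
  · obtain ⟨t, hct, htα, ht4⟩ := exists_subsuperset_card_eq (n := 4) (supp_subset_range hcdeg)
      (by omega) (by simpa using hn4)
    exact hc (eq_zero_of_support_subset_of_eval_zpow_eq_zero hn3 ht4 htα hct hzero)

/-- First class of reversible q-ary cyclic codes (Table I): if `gcd(n, 3) = 1`
and the codeword `c` vanishes at `α^i` for `i ∈ {−4, −2, −1, 1, 2, 4}`, then
`wt(c) ≥ 5`. -/
theorem reversible_class_one
    (F E : Type*) [Field F] [Fintype F] [Field E] [Algebra F E]
    (n : ℕ) (hn : 0 < n) (hn3 : Nat.gcd n 3 = 1)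
    (α : E) (hα : orderOf α = n)
    (c : Polynomial F) (hc : c ≠ 0) (hcdeg : c.natDegree < n)
    (hzero : ∀ i ∈ ({-4, -2, -1, 1, 2, 4} : Finset ℤ),
      (c.map (algebraMap F E)).eval (α ^ i) = 0) :
    5 ≤ c.support.card :=
  reversible_class_one_general F E n hn3 α hα c hc hcdeg hzero
end

section
/- Let F = 𝔽₂ be the field with two elements and E an extension field of F, let n be a positive integer with gcd(n, 3) = 1, and let α ∈ E have multiplicative order exactly n. If c ∈ 𝔽₂[X] is nonzero with deg c < n and c(α^i) = 0 for all i ∈ {−7, −5, −1, 1, 5, 7} (negative exponents interpreted through the order of α), then the Hamming weight of c is at least 11. -/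
open Polynomial Finset

/-!
Squaring is the Frobenius of `𝔽₂`, so `c(α^(2i)) = c(α^i)²` and every `i ∈ [-10, 10]` prime
to `3` lies in the zero set of `c`. Let `ω` be a primitive cube root of unity. The `2 wt(c)`
points `ω^e α^a` (`e ∈ {1, 2}`, `a ∈ supp c`) are distinct because `3 ∤ n`, and their `i`-th
power sum is `(ω^i + ω^(2i)) c(α^i)`: for `3 ∣ i` the first factor is `1 + 1 = 0`, otherwise
the second one vanishes. So the `21` power sums with exponents `-10, …, 10` all vanish, which
a Vandermonde determinant forbids for at most `20` distinct nonzero points.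
-/

theorem Finset.eq_empty_of_sum_zpow_eq_zero {K ι : Type*} [Field K] {s : Finset ι} {γ : ι → K}
    (hγ : Set.InjOn γ s) (hγ0 : ∀ j ∈ s, γ j ≠ 0) (b : ℤ)
    (h : ∀ k < #s, ∑ j ∈ s, γ j ^ (b + k) = 0) : s = ∅ := by
  by_contra hs
  obtain ⟨j₀, hj₀⟩ := nonempty_iff_ne_empty.2 hs
  let e := s.equivFin.symm
  have hv : (fun i => γ (e i) ^ b) = 0 := by
    refine Matrix.eq_zero_of_forall_pow_sum_mul_pow_eq_zero
      (fun i j hij => e.injective (Subtype.ext (hγ (e i).2 (e j).2 hij))) fun k => ?_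
    rw [e.sum_comp (fun j => γ j ^ b * γ j ^ (k : ℕ)),
      sum_coe_sort s (fun j => γ j ^ b * γ j ^ (k : ℕ)), ← h k k.2]
    exact sum_congr rfl fun j hj => by rw [zpow_add₀ (hγ0 j hj), zpow_natCast]
  have hj := (e ⟨0, card_pos.2 ⟨j₀, hj₀⟩⟩).2
  exact zpow_ne_zero b (hγ0 _ hj) (congrFun hv _)

theorem Polynomial.aeval_pow_char_pow {p : ℕ} [Fact p.Prime] {A : Type*} [CommSemiring A]
    [Algebra (ZMod p) A] (c : (ZMod p)[X]) (y : A) (e : ℕ) :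
    aeval (y ^ p ^ e) c = aeval y c ^ p ^ e := by
  induction e with
  | zero => simp
  | succ e ih => rw [pow_succ, pow_mul, ← expand_aeval, ZMod.expand_card, map_pow, ih, pow_mul]

theorem Polynomial.aeval_zpow_char_pow_mul_eq_zero {p : ℕ} [Fact p.Prime] {K : Type*} [Field K]
    [Algebra (ZMod p) K] {c : (ZMod p)[X]} {y : K} {j : ℤ} (h : aeval (y ^ j) c = 0) (e : ℕ) :
    aeval (y ^ (p ^ e * j)) c = 0 := by
  rw [mul_comm, zpow_mul, ← Nat.cast_pow, zpow_natCast, aeval_pow_char_pow, h,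
    zero_pow (pow_ne_zero _ (Fact.out : p.Prime).ne_zero)]

theorem aeval_zpow_eq_zero_of_not_three_dvd {E : Type*} [Field E] [Algebra (ZMod 2) E]
    {c : (ZMod 2)[X]} {y : E}
    (h : ∀ j ∈ ({-7, -5, -1, 1, 5, 7} : Finset ℤ), aeval (y ^ j) c = 0) :
    ∀ i ∈ Icc (-10 : ℤ) 10, ¬ 3 ∣ i → aeval (y ^ i) c = 0 := by
  intro i hi h3
  obtain ⟨j, hj, e, -, rfl⟩ :
      ∃ j ∈ ({-7, -5, -1, 1, 5, 7} : Finset ℤ), ∃ e < 4, i = 2 ^ e * j := by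
    revert i; decide
  exact aeval_zpow_char_pow_mul_eq_zero (h j hj) e

theorem Polynomial.aeval_eq_sum_support_pow_of_zmod_two {A : Type*} [Semiring A]
    [Algebra (ZMod 2) A] (c : (ZMod 2)[X]) (y : A) : aeval y c = ∑ a ∈ c.support, y ^ a := by
  rw [aeval_def, eval₂_eq_sum, Polynomial.sum_def]
  refine sum_congr rfl fun a ha => ?_
  have hcoeff : ∀ z : ZMod 2, z ≠ 0 → z = 1 := by decide
  rw [hcoeff _ (mem_support_iff.1 ha), map_one, one_mul]

theorem Finset.sum_product_zpow_pow_mul_pow {K : Type*} [Field K] (T s : Finset ℕ) (ζ x : K)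
    (i : ℤ) :
    ∑ p ∈ T ×ˢ s, (ζ ^ p.1 * x ^ p.2) ^ i = (∑ e ∈ T, (ζ ^ e) ^ i) * ∑ a ∈ s, (x ^ i) ^ a := by
  rw [sum_product, sum_mul_sum]
  refine sum_congr rfl fun e _ => sum_congr rfl fun a _ => ?_
  rw [mul_zpow, ← zpow_natCast x, ← zpow_natCast (x ^ i), ← zpow_mul, ← zpow_mul, mul_comm i]

theorem IsPrimitiveRoot.sum_product_zpow_pow_mul_pow_eq_zero {K : Type*} [Field K]
    [Algebra (ZMod 2) K] {ω : K} (hω : IsPrimitiveRoot ω 3) (x : K) {c : (ZMod 2)[X]} {i : ℤ}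
    (h : ¬ 3 ∣ i → aeval (x ^ i) c = 0) :
    ∑ p ∈ ({1, 2} : Finset ℕ) ×ˢ c.support, (ω ^ p.1 * x ^ p.2) ^ i = 0 := by
  have : CharP K 2 := charP_of_injective_algebraMap (algebraMap (ZMod 2) K).injective 2
  rw [sum_product_zpow_pow_mul_pow, ← aeval_eq_sum_support_pow_of_zmod_two]
  by_cases h3 : 3 ∣ i
  · have h1 : ω ^ i = 1 := (hω.zpow_eq_one_iff_dvd i).2 (by exact_mod_cast h3)
    have h2 : ∑ e ∈ ({1, 2} : Finset ℕ), (ω ^ e) ^ i = 0 := by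
      rw [sum_pair (by norm_num), pow_one, ← zpow_natCast ω 2, ← zpow_mul, mul_comm _ i,
        zpow_mul, h1, one_zpow, CharTwo.add_self_eq_zero]
    rw [h2, zero_mul]
  · rw [h h3, mul_zero]

theorem IsPrimitiveRoot.injOn_pow_mul_pow {M : Type*} [CommMonoid M] {ζ x : M} {k : ℕ}
    (hζ : IsPrimitiveRoot ζ k) (hx : (orderOf x).Coprime k) :
    Set.InjOn (fun p : ℕ × ℕ => ζ ^ p.1 * x ^ p.2) (Set.Iio k ×ˢ Set.Iio (orderOf x)) := by
  rintro ⟨e, a⟩ ⟨he, ha⟩ ⟨f, b⟩ ⟨hf, hb⟩ h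
  dsimp only at h
  have hpow : ∀ e a, (ζ ^ e * x ^ a) ^ orderOf x = (ζ ^ orderOf x) ^ e := fun e a => by
    rw [mul_pow, ← pow_mul, ← pow_mul, mul_comm a, pow_mul x, pow_orderOf_eq_one, one_pow,
      mul_one, mul_comm e, pow_mul]
  have hef : e = f := (hζ.pow_of_coprime _ hx).pow_inj he hf (by rw [← hpow e a, h, hpow])
  subst hef
  have hk : k ≠ 0 := by rintro rfl; exact Nat.not_lt_zero e he
  rw [show a = b from pow_injOn_Iio_orderOf ha hb (((hζ.isUnit hk).pow e).mul_left_cancel h)]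

theorem IsPrimitiveRoot.lt_two_mul_card_support {K : Type*} [Field K] [Algebra (ZMod 2) K]
    {ω x : K} (hω : IsPrimitiveRoot ω 3) (hx : (orderOf x).Coprime 3) {c : (ZMod 2)[X]}
    (hc : c ≠ 0) (hdeg : c.natDegree < orderOf x) (b : ℤ) (m : ℕ)
    (h : ∀ k < m, ¬ 3 ∣ b + k → aeval (x ^ (b + k)) c = 0) :
    m < 2 * #c.support := by
  by_contra! hm
  set s := ({1, 2} : Finset ℕ) ×ˢ c.support
  have hs : #s ≤ m := by rw [card_product, card_pair (by norm_num)]; exact hm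
  have hinj : Set.InjOn (fun p : ℕ × ℕ => ω ^ p.1 * x ^ p.2) s := by
    refine (hω.injOn_pow_mul_pow hx).mono fun p hp => ?_
    obtain ⟨h1, h2⟩ := mem_product.1 hp
    have h2' := le_natDegree_of_mem_supp _ h2
    simp only [mem_insert, mem_singleton] at h1
    simp only [Set.mem_prod, Set.mem_Iio]
    omega
  have hx0 : x ≠ 0 := by
    rintro rfl
    rw [orderOf_zero] at hdeg
    omega
  have hne : ∀ p ∈ s, ω ^ p.1 * x ^ p.2 ≠ 0 := fun p _ =>
    mul_ne_zero (pow_ne_zero _ (hω.ne_zero (by norm_num))) (pow_ne_zero _ hx0)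
  have hempty := eq_empty_of_sum_zpow_eq_zero hinj hne b fun k hk =>
    hω.sum_product_zpow_pow_mul_pow_eq_zero x (h k (hk.trans_le hs))
  simp [s, product_eq_empty, hc] at hempty

theorem binary_reversible_class_three_general
    (E : Type*) [Field E] [Algebra (ZMod 2) E]
    (n : ℕ) (hn3 : Nat.gcd n 3 = 1)
    (α : E) (hα : orderOf α = n)
    (c : Polynomial (ZMod 2)) (hc : c ≠ 0) (hcdeg : c.natDegree < n)
    (hzero : ∀ i ∈ ({-7, -5, -1, 1, 5, 7} : Finset ℤ),
      (c.map (algebraMap (ZMod 2) E)).eval (α ^ i) = 0) :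
    11 ≤ c.support.card := by
  have hroots := aeval_zpow_eq_zero_of_not_three_dvd (c := c) (y := α) fun j hj => by
    rw [← eval_map_algebraMap]; exact hzero j hj
  let K := AlgebraicClosure E
  have : CharP K 2 := charP_of_injective_algebraMap (algebraMap (ZMod 2) K).injective 2
  have : NeZero ((3 : ℕ) : K) := ⟨(CharP.cast_eq_zero_iff K 2 3).not.2 (by norm_num)⟩
  obtain ⟨ω, hω⟩ := HasEnoughRootsOfUnity.exists_primitiveRoot K 3
  have hx : orderOf (algebraMap E K α) = n :=
    hα ▸ orderOf_injective (algebraMap E K).toMonoidHom (algebraMap E K).injective α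
  have hcop : (orderOf (algebraMap E K α)).Coprime 3 := by rwa [hx, Nat.coprime_iff_gcd_eq_one]
  have := hω.lt_two_mul_card_support hcop hc (hx ▸ hcdeg) (-10) 21 fun k hk h3 => by
    rw [← map_zpow₀, aeval_algebraMap_apply, hroots _ (by simp only [mem_Icc]; omega) h3, map_zero]
  omega

/-- Third class of binary reversible cyclic codes (Table I): if
`gcd(n, 3) = 1` and the binary codeword `c` vanishes at `α^i` for
`i ∈ {−7, −5, −1, 1, 5, 7}`, then `wt(c) ≥ 11`. -/
theorem binary_reversible_class_three
    (E : Type*) [Field E] [Algebra (ZMod 2) E]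
    (n : ℕ) (hn : 0 < n) (hn3 : Nat.gcd n 3 = 1)
    (α : E) (hα : orderOf α = n)
    (c : Polynomial (ZMod 2)) (hc : c ≠ 0) (hcdeg : c.natDegree < n)
    (hzero : ∀ i ∈ ({-7, -5, -1, 1, 5, 7} : Finset ℤ),
      (c.map (algebraMap (ZMod 2) E)).eval (α ^ i) = 0) :
    11 ≤ c.support.card :=
  binary_reversible_class_three_general E n hn3 α hα c hc hcdeg hzero
end

section
/- Let F = 𝔽₂ be the field with two elements and E an extension field of F, let n be a positive integer with gcd(n, 3) = 1, and let α ∈ E have multiplicative order exactly n. If c ∈ 𝔽₂[X] is nonzero with deg c < n and c(α^i) = 0 for all i ∈ {−5, −1, 1, 5} (negative exponents interpreted through the order of α), then the Hamming weight of c is at least 7. -/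
/-!
Write `x = α^a` for the exponents `a` in the support of `c`: these are `w = wt(c)` distinct nonzero
elements of a field of characteristic 2 whose power sums `p₁, p₅, p₋₁, p₋₅` vanish, and on which
cubing is injective because `gcd(n, 3) = 1`. Newton's identities turn `p₁ = p₅ = 0` into
`e₁ = 0` and `e₅ = e₂e₃` for their elementary symmetric functions, and the same for the inverses,
whose symmetric functions are `e_{w-k}/e_w`. For `w ≤ 6` these relations make
`∏ (X + x) = ∑ e_k X^{w-k}` a polynomial in `X²` or `X³` of degree `< w`, or the product
`(X² + e₂)(X³ + e₃)`, and injectivity of squaring and cubing leaves room for fewer than `w` roots.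
-/

open Polynomial Finset

theorem Multiset.esymm_zero {R : Type*} [CommSemiring R] (s : Multiset R) : s.esymm 0 = 1 := by
  simp [Multiset.esymm]

theorem prod_mul_esymm_inv {ι K : Type*} [Field K] (s : Finset ι) (x : ι → K)
    (hx : ∀ i ∈ s, x i ≠ 0) {k : ℕ} (hk : k ≤ #s) :
    (∏ i ∈ s, x i) * (s.val.map fun i => (x i)⁻¹).esymm k = (s.val.map x).esymm (#s - k) := by
  classical
  rw [esymm_map_val, esymm_map_val, mul_sum]
  refine sum_nbij' (s \ ·) (s \ ·) ?_ ?_ ?_ ?_ ?_ <;> simp only [mem_powersetCard, and_imp]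
  · exact fun t hts ht => ⟨sdiff_subset, by rw [card_sdiff_of_subset hts, ht]⟩
  · exact fun t hts ht => ⟨sdiff_subset, by rw [card_sdiff_of_subset hts, ht]; omega⟩
  · exact fun t hts _ => Finset.sdiff_sdiff_eq_self hts
  · exact fun t hts _ => Finset.sdiff_sdiff_eq_self hts
  · intro t hts _
    rw [← prod_sdiff hts, mul_assoc, ← prod_mul_distrib,
      prod_congr rfl fun i hi => mul_inv_cancel₀ (hx i (hts hi)), prod_const_one, mul_one]

theorem esymm_mul_eq_sum_charTwo {ι R : Type*} [CommRing R] [CharP R 2] (s : Finset ι)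
    (x : ι → R) (k : ℕ) :
    (k : R) * (s.val.map x).esymm k =
      ∑ i ∈ range k, (s.val.map x).esymm i * ∑ j ∈ s, x j ^ (k - i) := by
  have h := congrArg (MvPolynomial.aeval fun j : s => x j) (MvPolynomial.mul_esymm_eq_sum s R k)
  have hval : (univ.val.map fun j : s => x j) = s.val.map x := by
    rw [univ_eq_attach, attach_val]
    exact Multiset.attach_map_val' s.val x
  simp only [map_mul, map_natCast, map_pow, map_sum, MvPolynomial.aeval_esymm_eq_multiset_esymm,
    MvPolynomial.psum, MvPolynomial.aeval_X, CharTwo.neg_eq, one_pow, one_mul, hval] at h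
  rw [h, sum_filter, Nat.sum_antidiagonal_eq_sum_range_succ_mk, sum_range_succ,
    if_neg (lt_irrefl k), add_zero]
  refine sum_congr rfl fun i hi => ?_
  rw [if_pos (mem_range.mp hi), sum_coe_sort s (fun j => x j ^ (k - i))]

theorem esymm_one_eq_zero_and_esymm_five_eq {ι R : Type*} [CommRing R] [CharP R 2]
    (s : Finset ι) (x : ι → R) (h1 : ∑ j ∈ s, x j = 0) (h5 : ∑ j ∈ s, x j ^ 5 = 0) :
    (s.val.map x).esymm 1 = 0 ∧
      (s.val.map x).esymm 5 = (s.val.map x).esymm 2 * (s.val.map x).esymm 3 := by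
  set e := (s.val.map x).esymm
  have h2 : ∑ j ∈ s, x j ^ 2 = 0 := by rw [← CharTwo.sum_sq, h1, zero_pow two_ne_zero]
  have h4 : ∑ j ∈ s, x j ^ 4 = 0 := by
    simp_rw [show 4 = 2 * 2 from rfl, pow_mul]
    rw [← CharTwo.sum_sq, h2, zero_pow two_ne_zero]
  have n1 := esymm_mul_eq_sum_charTwo s x 1
  have n3 := esymm_mul_eq_sum_charTwo s x 3
  have n5 := esymm_mul_eq_sum_charTwo s x 5
  simp only [sum_range_succ, sum_range_zero, Nat.cast_one, Nat.cast_ofNat, Nat.reduceSub, pow_one,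
    Multiset.esymm_zero, h1, h2, h4, h5, mul_zero, add_zero, zero_add, one_mul] at n1 n3 n5
  refine ⟨n1, ?_⟩
  linear_combination n5 - e 2 * n3 + (e 2 * e 3 - 2 * e 5) * (CharTwo.two_eq_zero : (2 : R) = 0)

theorem sum_esymm_mul_pow_eq_zero {ι R : Type*} [CommRing R] [CharP R 2] (s : Finset ι)
    (x : ι → R) {i : ι} (hi : i ∈ s) :
    ∑ j ∈ range (#s + 1), (s.val.map x).esymm j * x i ^ (#s - j) = 0 := by
  have h := congrArg (eval (x i)) (Multiset.prod_X_add_C_eq_sum_esymm (s.val.map x))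
  simp only [Multiset.card_map, card_val, eval_finsetSum, eval_mul, eval_C, eval_pow, eval_X,
    eval_multiset_prod, Multiset.map_map] at h
  rw [← h]
  refine Multiset.prod_eq_zero (Multiset.mem_map.mpr ⟨i, hi, ?_⟩)
  simp [CharTwo.add_self_eq_zero]

theorem card_le_natDegree_of_injOn {ι R : Type*} [CommRing R] [IsDomain R] {s : Finset ι}
    {y : ι → R} (hy : Set.InjOn y s) {g : R[X]} (hg : g ≠ 0)
    (hroot : ∀ i ∈ s, g.eval (y i) = 0) : #s ≤ g.natDegree := by
  classical
  rw [← card_image_of_injOn hy]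
  refine card_le_degree_of_subset_roots fun z hz => ?_
  obtain ⟨i, hi, rfl⟩ := mem_image.mp hz
  exact (mem_roots hg).mpr (hroot i hi)

theorem card_le_one_of_injOn_of_eq {ι α : Type*} {s : Finset ι} {y : ι → α}
    (hy : Set.InjOn y s) {a : α} (h : ∀ i ∈ s, y i = a) : #s ≤ 1 :=
  card_le_one.mpr fun i hi j hj => hy hi hj ((h i hi).trans (h j hj).symm)

theorem card_le_two_of_forall_eq_or_eq {ι α β : Type*} {s : Finset ι} {y : ι → α} {z : ι → β}
    (hy : Set.InjOn y s) (hz : Set.InjOn z s) {a : α} {b : β}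
    (h : ∀ i ∈ s, y i = a ∨ z i = b) : #s ≤ 2 := by
  classical
  have hsub : s ⊆ s.filter (fun i => y i = a) ∪ s.filter (fun i => z i = b) :=
    fun i hi => by rw [← filter_or]; exact mem_filter.mpr ⟨hi, h i hi⟩
  have hya : #(s.filter fun i => y i = a) ≤ 1 :=
    card_le_one_of_injOn_of_eq (hy.mono fun i hi => (mem_filter.mp hi).1) fun i hi =>
      (mem_filter.mp hi).2
  have hzb : #(s.filter fun i => z i = b) ≤ 1 :=
    card_le_one_of_injOn_of_eq (hz.mono fun i hi => (mem_filter.mp hi).1) fun i hi =>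
      (mem_filter.mp hi).2
  have := (card_le_card hsub).trans (card_union_le _ _)
  omega

theorem injOn_sq_of_injOn_cube {ι K : Type*} [Field K] [CharP K 2] {s : Finset ι} {x : ι → K}
    (hx3 : Set.InjOn (fun i => x i ^ 3) s) : Set.InjOn (fun i => x i ^ 2) s :=
  fun i hi j hj h => hx3 hi hj (by simp only [CharTwo.sq_inj.mp h])

theorem card_le_three_of_sextic_eq_zero {ι K : Type*} [Field K] [CharP K 2] {s : Finset ι}
    {x : ι → K} (hx3 : Set.InjOn (fun i => x i ^ 3) s) {a b c d : K} (hab : a * b = 0)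
    (hbc : b * c = 0) (hroot : ∀ i ∈ s, x i ^ 6 + a * x i ^ 4 + b * x i ^ 3 + c * x i ^ 2 + d = 0) :
    #s ≤ 3 := by
  by_cases hb : b = 0
  · have hg : (X ^ 3 + C a * X ^ 2 + C c * X + C d).Monic := by monicity!
    have hdeg : (X ^ 3 + C a * X ^ 2 + C c * X + C d).natDegree ≤ 3 := by compute_degree
    have := card_le_natDegree_of_injOn (injOn_sq_of_injOn_cube hx3) hg.ne_zero fun i hi => by
      simp only [eval_add, eval_pow, eval_mul, eval_C, eval_X]
      linear_combination hroot i hi - x i ^ 3 * hb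
    omega
  · have ha : a = 0 := (mul_eq_zero.mp hab).resolve_right hb
    have hc : c = 0 := (mul_eq_zero.mp hbc).resolve_left hb
    have hg : (X ^ 2 + C b * X + C d).Monic := by monicity!
    have hdeg : (X ^ 2 + C b * X + C d).natDegree ≤ 2 := by compute_degree
    have := card_le_natDegree_of_injOn hx3 hg.ne_zero fun i hi => by
      simp only [eval_add, eval_pow, eval_mul, eval_C, eval_X]
      linear_combination hroot i hi - x i ^ 4 * ha - x i ^ 2 * hc
    omega

theorem seven_le_card_of_esymm_relations {ι K : Type*} [Field K] [CharP K 2] {s : Finset ι}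
    (hs : s.Nonempty) {x : ι → K} (hx3 : Set.InjOn (fun i => x i ^ 3) s) (e : ℕ → K)
    (hroot : ∀ i ∈ s, ∑ j ∈ range (#s + 1), e j * x i ^ (#s - j) = 0) (he0 : e 0 = 1)
    (he1 : e 1 = 0) (he5 : e 5 = e 2 * e 3) (hw1 : e (#s - 1) = 0)
    (hw5 : 5 ≤ #s → e #s * e (#s - 5) = e (#s - 2) * e (#s - 3)) : 7 ≤ #s := by
  have hx2 := injOn_sq_of_injOn_cube hx3
  have hchar : (2 : K) = 0 := CharTwo.two_eq_zero
  by_contra! hlt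
  obtain ⟨w, hw⟩ : ∃ w, #s = w := ⟨_, rfl⟩
  have hpos : 0 < w := hw ▸ hs.card_pos
  rw [hw] at hroot hw1 hw5 hlt
  interval_cases w <;> simp only [sum_range_succ, sum_range_zero, he0, he1, Nat.reduceSub,
    Nat.sub_self, pow_zero, pow_one, one_mul, mul_one, zero_mul, zero_add, add_zero]
    at hroot hw1 hw5
  · exact one_ne_zero hw1
  · have := card_le_one_of_injOn_of_eq hx2 (a := e 2) fun i hi => by
      linear_combination hroot i hi - e 2 * hchar
    omega
  · have := card_le_one_of_injOn_of_eq hx3 (a := e 3) fun i hi => by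
      linear_combination hroot i hi - x i * hw1 - e 3 * hchar
    omega
  · have hg : (X ^ 2 + C (e 2) * X + C (e 4)).Monic := by monicity!
    have hdeg : (X ^ 2 + C (e 2) * X + C (e 4)).natDegree ≤ 2 := by compute_degree
    have := card_le_natDegree_of_injOn hx2 hg.ne_zero fun i hi => by
      simp only [eval_add, eval_pow, eval_mul, eval_C, eval_X]
      linear_combination hroot i hi - x i * hw1
    omega
  · have := card_le_two_of_forall_eq_or_eq hx2 hx3 (a := e 2) (b := e 3) fun i hi => by
      have : (x i ^ 2 + e 2) * (x i ^ 3 + e 3) = 0 := by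
        linear_combination hroot i hi - x i * hw1 - he5
      simpa only [mul_eq_zero, CharTwo.add_eq_zero] using this
    omega
  · have := card_le_three_of_sextic_eq_zero hx3 (a := e 2) (b := e 3) (c := e 4) (d := e 6)
      (he5 ▸ hw1) (by linear_combination -hw5 (by norm_num)) fun i hi => by
        linear_combination hroot i hi - x i * hw1
    omega

theorem seven_le_card_of_sum_zpow_eq_zero {ι K : Type*} [Field K] [CharP K 2] {s : Finset ι}
    (hs : s.Nonempty) {x : ι → K} (hx0 : ∀ i ∈ s, x i ≠ 0)
    (hx3 : Set.InjOn (fun i => x i ^ 3) s)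
    (hsum : ∀ k ∈ ({-5, -1, 1, 5} : Finset ℤ), ∑ i ∈ s, x i ^ k = 0) : 7 ≤ #s := by
  have h1 := hsum 1 (by decide)
  have h5 := hsum 5 (by decide)
  have h1' := hsum (-1) (by decide)
  have h5' := hsum (-5) (by decide)
  simp only [zpow_neg, zpow_ofNat, pow_one, ← inv_pow] at h1 h5 h1' h5'
  obtain ⟨he1, he5⟩ := esymm_one_eq_zero_and_esymm_five_eq s x h1 h5
  obtain ⟨hf1, hf5⟩ := esymm_one_eq_zero_and_esymm_five_eq s (fun i => (x i)⁻¹) h1' h5'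
  have hinv {k : ℕ} (hk : k ≤ #s) := prod_mul_esymm_inv s x hx0 hk
  refine seven_le_card_of_esymm_relations hs hx3 _ (fun i hi => sum_esymm_mul_pow_eq_zero s x hi)
    (Multiset.esymm_zero _) he1 he5 ?_ fun h5s => ?_
  · rw [← hinv hs.card_pos, hf1, mul_zero]
  · have hprod := hinv (Nat.zero_le #s)
    rw [Multiset.esymm_zero, mul_one, Nat.sub_zero] at hprod
    rw [← hprod, ← hinv h5s, ← hinv (by omega : 2 ≤ #s), ← hinv (by omega : 3 ≤ #s), hf5]
    ring

theorem eval_map_eq_sum_support_pow {R : Type*} [Semiring R] (f : ZMod 2 →+* R)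
    (c : (ZMod 2)[X]) (y : R) : (c.map f).eval y = ∑ a ∈ c.support, y ^ a := by
  rw [eval_map, eval₂_eq_sum, sum_def]
  refine sum_congr rfl fun a ha => ?_
  have hbin : ∀ u : ZMod 2, u ≠ 0 → u = 1 := by decide
  rw [hbin _ (mem_support_iff.mp ha), map_one, one_mul]

theorem eq_of_pow_eq_of_pow_eq_one {G : Type*} [CommGroupWithZero G] {x y : G} {n k : ℕ}
    (hnk : n.Coprime k) (hy : y ≠ 0) (hxn : x ^ n = 1) (hyn : y ^ n = 1) (h : x ^ k = y ^ k) :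
    x = y := by
  have hn : (x / y) ^ n = 1 := by rw [div_pow, hxn, hyn, div_one]
  have hk : (x / y) ^ k = 1 := by rw [div_pow, h, div_self (pow_ne_zero k hy)]
  have := pow_gcd_eq_one.mpr ⟨hn, hk⟩
  rwa [hnk, pow_one, div_eq_one_iff_eq hy] at this

theorem binary_reversible_class_two_general
    (E : Type*) [Field E] [Algebra (ZMod 2) E]
    (n : ℕ) (hn3 : Nat.gcd n 3 = 1)
    (α : E) (hα : orderOf α = n)
    (c : Polynomial (ZMod 2)) (hc : c ≠ 0) (hcdeg : c.natDegree < n)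
    (hzero : ∀ i ∈ ({-5, -1, 1, 5} : Finset ℤ),
      (c.map (algebraMap (ZMod 2) E)).eval (α ^ i) = 0) :
    7 ≤ c.support.card := by
  have : CharP E 2 := charP_of_injective_algebraMap (algebraMap (ZMod 2) E).injective 2
  have hlt : ∀ a ∈ c.support, a < orderOf α := fun a ha =>
    hα ▸ (le_natDegree_of_mem_supp a ha).trans_lt hcdeg
  have hα0 : α ≠ 0 :=
    (orderOf_pos_iff.mp (hα ▸ (Nat.zero_le _).trans_lt hcdeg)).isUnit.ne_zero
  have hroots (a : ℕ) : (α ^ a) ^ n = 1 := by rw [← hα, pow_right_comm, pow_orderOf_eq_one, one_pow]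
  refine seven_le_card_of_sum_zpow_eq_zero (support_nonempty.mpr hc)
    (fun a _ => pow_ne_zero a hα0) (fun a ha b hb h => ?_) fun k hk => ?_
  · exact pow_injOn_Iio_orderOf (hlt a ha) (hlt b hb)
      (eq_of_pow_eq_of_pow_eq_one hn3 (pow_ne_zero b hα0) (hroots a) (hroots b) h)
  · rw [← hzero k hk, eval_map_eq_sum_support_pow]
    exact sum_congr rfl fun a _ => by rw [← zpow_natCast, zpow_comm, zpow_natCast]

/-- Second class of binary reversible cyclic codes (Table I): if
`gcd(n, 3) = 1` and the binary codeword `c` vanishes at `α^i` for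
`i ∈ {−5, −1, 1, 5}`, then `wt(c) ≥ 7`. -/
theorem binary_reversible_class_two
    (E : Type*) [Field E] [Algebra (ZMod 2) E]
    (n : ℕ) (hn : 0 < n) (hn3 : Nat.gcd n 3 = 1)
    (α : E) (hα : orderOf α = n)
    (c : Polynomial (ZMod 2)) (hc : c ≠ 0) (hcdeg : c.natDegree < n)
    (hzero : ∀ i ∈ ({-5, -1, 1, 5} : Finset ℤ),
      (c.map (algebraMap (ZMod 2) E)).eval (α ^ i) = 0) :
    7 ≤ c.support.card :=
  binary_reversible_class_two_general E n hn3 α hα c hc hcdeg hzero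
end
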